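/- arXiv:2306.17097 — 5 statements merged into one kernel-verified Lean document; each statement's English description precedes it below -/
import Mathlib

section
/- For the equally spaced one-dimensional points p_i = i for i = 1,...,5, every maximal one-page plane oriented graph with baseline on these points has oriented dilation at least 2; concretely, for the point set {1,2,3,4,5}, in each of the five maximal 1-PPB graphs there exists a pair (p_i, p_{i+2}) whose shortest oriented cycle has length 2·(p_5 − p_1) = 8, while the optimal cycle has length 2·(p_{i+2} − p_i) = 4, giving dilation 8/4 = 2. -/
/-- A closed walk of combinatorial length `L ≥ 1` in the digraph `E`. -/
def IsClosedWalk {V : Type*} (E : V → V → Prop) (L : ℕ) (c : ℕ → V) : Prop :=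
  1 ≤ L ∧ c L = c 0 ∧ ∀ t < L, E (c t) (c (t + 1))

lemma tv_range (f : ℕ → ℝ) (n : ℕ) :
    |f n - f 0| ≤ ∑ t ∈ Finset.range n, |f (t + 1) - f t| := by
  rw [← Finset.sum_range_sub f n]
  exact Finset.abs_sum_le_sum_abs _ _

lemma tv_Ico (f : ℕ → ℝ) (a b : ℕ) (hab : a ≤ b) :
    |f b - f a| ≤ ∑ t ∈ Finset.Ico a b, |f (t + 1) - f t| := by
  have h := tv_range (fun t => f (a + t)) (b - a)
  rw [Finset.sum_Ico_eq_sum_range]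
  have hb : a + (b - a) = b := by omega
  simpa [hb, Nat.add_assoc] using h

lemma walk_lb (f : ℕ → ℝ) (L t1 t2 : ℕ) (hc : f L = f 0)
    (h2 : t2 ≤ L) (h12 : t1 ≤ t2) :
    2 * |f t2 - f t1| ≤ ∑ t ∈ Finset.range L, |f (t + 1) - f t| := by
  rw [Finset.range_eq_Ico, ← Finset.sum_Ico_consecutive _ (Nat.zero_le t2) h2,
    ← Finset.sum_Ico_consecutive _ (Nat.zero_le t1) h12]
  have A := tv_Ico f t1 t2 h12
  have B := tv_Ico f 0 t1 (Nat.zero_le _)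
  have C := tv_Ico f t2 L h2
  have D : |f t1 - f t2| ≤ |f t1 - f 0| + |f L - f t2| := by
    rw [hc]; exact abs_sub_le _ _ _
  have E : |f t2 - f t1| = |f t1 - f t2| := abs_sub_comm _ _
  linarith

lemma walk_lb' (f : ℕ → ℝ) (L t1 t2 : ℕ) (hc : f L = f 0)
    (h1 : t1 ≤ L) (h2 : t2 ≤ L) :
    2 * |f t2 - f t1| ≤ ∑ t ∈ Finset.range L, |f (t + 1) - f t| := by
  rcases le_total t1 t2 with h | h
  · exact walk_lb f L t1 t2 hc h2 h
  · rw [abs_sub_comm]; exact walk_lb f L t2 t1 hc h1 h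

lemma visit_out {E : Fin 5 → Fin 5 → Prop} {L : ℕ} {c : ℕ → Fin 5}
    (hw : IsClosedWalk E L c) {i j : Fin 5}
    (hout : ∀ x, E i x → x = j) (hi : ∃ t < L, c t = i) : ∃ t ≤ L, c t = j := by
  obtain ⟨t, ht, hct⟩ := hi
  exact ⟨t + 1, ht, hout _ (hct ▸ hw.2.2 t ht)⟩

lemma visit_in {E : Fin 5 → Fin 5 → Prop} {L : ℕ} {c : ℕ → Fin 5}
    (hw : IsClosedWalk E L c) {i j : Fin 5}
    (hin : ∀ x, E x i → x = j) (hi : ∃ t < L, c t = i) : ∃ t ≤ L, c t = j := by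
  obtain ⟨t, ht, hct⟩ := hi
  cases t with
  | zero =>
    have h1 : L - 1 < L := by omega
    have h2 : L - 1 + 1 = L := by omega
    have := hw.2.2 (L - 1) h1
    rw [h2, hw.2.1, hct] at this
    exact ⟨L - 1, by omega, hin _ this⟩
  | succ s =>
    have := hw.2.2 s (by omega)
    rw [hct] at this
    exact ⟨s, by omega, hin _ this⟩

lemma lb_main (p : Fin 5 → ℝ) (hp : ∀ i, p i = (i : ℕ) + 1) {E : Fin 5 → Fin 5 → Prop}
    {L : ℕ} {c : ℕ → Fin 5} (hw : IsClosedWalk E L c)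
    (h0 : ∃ t ≤ L, c t = 0) (h4 : ∃ t ≤ L, c t = 4) :
    (8 : ℝ) ≤ ∑ t ∈ Finset.range L, |p (c (t + 1)) - p (c t)| := by
  obtain ⟨t1, ht1, h1⟩ := h0
  obtain ⟨t2, ht2, h2⟩ := h4
  have key := walk_lb' (fun t => p (c t)) L t1 t2 (by simp [hw.2.1]) ht1 ht2
  simp only [h1, h2] at key
  have e4 : ((4 : Fin 5) : ℕ) = 4 := rfl
  have e0 : ((0 : Fin 5) : ℕ) = 0 := rfl
  rw [hp, hp, e4, e0] at key
  norm_num at key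
  linarith

lemma exists_walk {B E : Fin 5 → Fin 5 → Prop}
    (hE : ∀ a b, E a b ↔ ((a : ℕ) + 1 = (b : ℕ) ∨ B a b)) (hB40 : B 4 0)
    (p : Fin 5 → ℝ) (hp : ∀ i, p i = (i : ℕ) + 1) (i₁ i₂ : Fin 5) :
    ∃ L c, IsClosedWalk E L c ∧ (∃ t < L, c t = i₁) ∧ (∃ t < L, c t = i₂) ∧
      (∑ t ∈ Finset.range L, |p (c (t + 1)) - p (c t)|) = 8 := by
  refine ⟨5, fun t => ⟨t % 5, Nat.mod_lt _ (by norm_num)⟩, ⟨by norm_num, by decide, ?_⟩,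
    ⟨(i₁ : ℕ), i₁.isLt, Fin.ext (by simp [Nat.mod_eq_of_lt i₁.isLt])⟩,
    ⟨(i₂ : ℕ), i₂.isLt, Fin.ext (by simp [Nat.mod_eq_of_lt i₂.isLt])⟩, ?_⟩
  · intro t ht
    interval_cases t
    · exact (hE _ _).2 (Or.inl rfl)
    · exact (hE _ _).2 (Or.inl rfl)
    · exact (hE _ _).2 (Or.inl rfl)
    · exact (hE _ _).2 (Or.inl rfl)
    · exact (hE _ _).2 (Or.inr hB40)
  · simp [Finset.sum_range_succ, hp]
    norm_num

section Helpers
variable {B E : Fin 5 → Fin 5 → Prop}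
  (hvalid : ∀ j i, B j i → (i : ℕ) + 2 ≤ (j : ℕ))
  (hE : ∀ a b, E a b ↔ ((a : ℕ) + 1 = (b : ℕ) ∨ B a b))

include hvalid hE in
lemma hout4 (h41 : ¬B 4 1) (h42 : ¬B 4 2) : ∀ x, E 4 x → x = 0 := by
  intro x hx
  rcases (hE _ _).1 hx with h | h
  · exfalso
    have h4 : ((4 : Fin 5) : ℕ) = 4 := rfl
    rw [h4] at h
    have := x.isLt
    omega
  · have hv := hvalid _ _ h
    fin_cases x
    · rfl
    · exact absurd h h41
    · exact absurd h h42
    · exact absurd hv (by decide)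
    · exact absurd hv (by decide)

include hvalid hE in
lemma hout3 (h30 : ¬B 3 0) (h31 : ¬B 3 1) : ∀ x, E 3 x → x = 4 := by
  intro x hx
  rcases (hE _ _).1 hx with h | h
  · have h3 : ((3 : Fin 5) : ℕ) = 3 := rfl
    rw [h3] at h
    have := x.isLt
    exact Fin.ext (by omega)
  · have hv := hvalid _ _ h
    fin_cases x
    · exact absurd h h30
    · exact absurd h h31
    · exact absurd hv (by decide)
    · exact absurd hv (by decide)
    · exact absurd hv (by decide)

include hvalid hE in
lemma hin0 (h20 : ¬B 2 0) (h30 : ¬B 3 0) : ∀ x, E x 0 → x = 4 := by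
  intro x hx
  rcases (hE _ _).1 hx with h | h
  · exfalso
    have h0 : ((0 : Fin 5) : ℕ) = 0 := rfl
    rw [h0] at h
    omega
  · have hv := hvalid _ _ h
    fin_cases x
    · exact absurd hv (by decide)
    · exact absurd hv (by decide)
    · exact absurd h h20
    · exact absurd h h30
    · rfl

include hvalid hE in
lemma hin1 (h31 : ¬B 3 1) (h41 : ¬B 4 1) : ∀ x, E x 1 → x = 0 := by
  intro x hx
  rcases (hE _ _).1 hx with h | h
  · have h1 : ((1 : Fin 5) : ℕ) = 1 := rfl
    rw [h1] at h
    exact Fin.ext (by omega)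
  · have hv := hvalid _ _ h
    fin_cases x
    · exact absurd hv (by decide)
    · exact absurd hv (by decide)
    · exact absurd hv (by decide)
    · exact absurd h h31
    · exact absurd h h41
end Helpers

lemma leaf {B E : Fin 5 → Fin 5 → Prop}
    (hE : ∀ a b, E a b ↔ ((a : ℕ) + 1 = (b : ℕ) ∨ B a b)) (hB40 : B 4 0)
    (p : Fin 5 → ℝ) (hp : ∀ i, p i = (i : ℕ) + 1) (i₁ i₂ : Fin 5)
    (hii : (i₁ : ℕ) + 2 = (i₂ : ℕ))
    (hvis : ∀ (L : ℕ) (c : ℕ → Fin 5), IsClosedWalk E L c →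
      (∃ t < L, c t = i₁) → (∃ t < L, c t = i₂) →
      (∃ t ≤ L, c t = 0) ∧ (∃ t ≤ L, c t = 4)) :
    ∃ i₁ i₂ : Fin 5, (i₁ : ℕ) + 2 = (i₂ : ℕ) ∧
      (∀ (L : ℕ) (c : ℕ → Fin 5), IsClosedWalk E L c →
        (∃ t < L, c t = i₁) → (∃ t < L, c t = i₂) →
        2 * (2 * (p i₂ - p i₁)) ≤ ∑ t ∈ Finset.range L, |p (c (t + 1)) - p (c t)|) ∧
      (∃ (L : ℕ) (c : ℕ → Fin 5), IsClosedWalk E L c ∧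
        (∃ t < L, c t = i₁) ∧ (∃ t < L, c t = i₂) ∧
        (∑ t ∈ Finset.range L, |p (c (t + 1)) - p (c t)|) = 2 * (2 * (p i₂ - p i₁))) := by
  have h8 : 2 * (2 * (p i₂ - p i₁)) = 8 := by
    have h2 : (i₂ : ℕ) = (i₁ : ℕ) + 2 := hii.symm
    rw [hp, hp, h2]
    push_cast
    ring
  refine ⟨i₁, i₂, hii, ?_, ?_⟩
  · intro L c hw h1 h2
    obtain ⟨v0, v4⟩ := hvis L c hw h1 h2
    rw [h8]
    exact lb_main p hp hw v0 v4
  · obtain ⟨L, c, hw, h1, h2, hs⟩ := exists_walk hE hB40 p hp i₁ i₂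
    exact ⟨L, c, hw, h1, h2, by rw [hs, h8]⟩

/-- For the five equally spaced points `p i = i + 1` (`i = 0,…,4`), in
every maximal one-page plane oriented graph with baseline (maximal 1-PPB graph)
there is a pair `(p i₁, p i₂)` with `i₂ = i₁ + 2` whose shortest oriented cycle has
length `2·(p 4 − p 0) = 8 = 2·(2·(p i₂ − p i₁))`, while the optimal cycle has length
`2·(p i₂ − p i₁) = 4`; hence the oriented dilation is at least `2`. -/
theorem stmt3 (B : Fin 5 → Fin 5 → Prop)
    (hvalid : ∀ j i, B j i → (i : ℕ) + 2 ≤ (j : ℕ))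
    (hnoncross : ∀ j i l k, B j i → B l k →
      ¬((i : ℕ) < (k : ℕ) ∧ (k : ℕ) < (j : ℕ) ∧ (j : ℕ) < (l : ℕ)))
    (hmax : ∀ j i : Fin 5, (i : ℕ) + 2 ≤ (j : ℕ) → ¬B j i →
      ∃ l k, B l k ∧
        (((i : ℕ) < (k : ℕ) ∧ (k : ℕ) < (j : ℕ) ∧ (j : ℕ) < (l : ℕ)) ∨
         ((k : ℕ) < (i : ℕ) ∧ (i : ℕ) < (l : ℕ) ∧ (l : ℕ) < (j : ℕ))))
    (p : Fin 5 → ℝ) (hp : ∀ i, p i = (i : ℕ) + 1)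
    (E : Fin 5 → Fin 5 → Prop)
    (hE : ∀ a b, E a b ↔ ((a : ℕ) + 1 = (b : ℕ) ∨ B a b)) :
    ∃ i₁ i₂ : Fin 5, (i₁ : ℕ) + 2 = (i₂ : ℕ) ∧
      (∀ (L : ℕ) (c : ℕ → Fin 5), IsClosedWalk E L c →
        (∃ t < L, c t = i₁) → (∃ t < L, c t = i₂) →
        2 * (2 * (p i₂ - p i₁)) ≤ ∑ t ∈ Finset.range L, |p (c (t + 1)) - p (c t)|) ∧
      (∃ (L : ℕ) (c : ℕ → Fin 5), IsClosedWalk E L c ∧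
        (∃ t < L, c t = i₁) ∧ (∃ t < L, c t = i₂) ∧
        (∑ t ∈ Finset.range L, |p (c (t + 1)) - p (c t)|) = 2 * (2 * (p i₂ - p i₁))) := by
  classical
  have e0 : ((0 : Fin 5) : ℕ) = 0 := rfl
  have e1 : ((1 : Fin 5) : ℕ) = 1 := rfl
  have e2 : ((2 : Fin 5) : ℕ) = 2 := rfl
  have e3 : ((3 : Fin 5) : ℕ) = 3 := rfl
  have e4 : ((4 : Fin 5) : ℕ) = 4 := rfl
  have hB40 : B 4 0 := by
    by_contra h
    obtain ⟨l, k, hBlk, hc⟩ := hmax 4 0 (by decide) h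
    rw [e4, e0] at hc
    have := l.isLt
    omega
  by_cases ha : B 2 0
  · have hnd : ¬B 3 1 := fun hd => hnoncross 2 0 3 1 ha hd (by decide)
    have hne : ¬B 4 1 := fun he => hnoncross 2 0 4 1 ha he (by decide)
    by_cases hb : B 3 0
    · -- case {20, 30, 40} : pair (2, 4)
      have hnf : ¬B 4 2 := fun hf => hnoncross 3 0 4 2 hb hf (by decide)
      refine leaf hE hB40 p hp 2 4 (by decide) ?_
      intro L c hw h1 h2
      refine ⟨visit_out hw (hout4 hvalid hE hne hnf) h2, ?_⟩
      obtain ⟨t, ht, hc⟩ := h2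
      exact ⟨t, le_of_lt ht, hc⟩
    · -- case {20, 40, 42} : pair (1, 3)
      obtain ⟨l, k, hBlk, hc⟩ := hmax 3 0 (by decide) hb
      rw [e3, e0] at hc
      have hl5 := l.isLt
      have hk5 := k.isLt
      have hl : l = 4 := Fin.ext (by rw [e4]; omega)
      have hk : (k : ℕ) = 1 ∨ (k : ℕ) = 2 := by omega
      rcases hk with hk | hk
      · have hk1 : k = 1 := Fin.ext (by rw [e1]; omega)
        rw [hl, hk1] at hBlk
        exact absurd hBlk hne
      · have hk2 : k = 2 := Fin.ext (by rw [e2]; omega)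
        have hf : B 4 2 := by rwa [hl, hk2] at hBlk
        refine leaf hE hB40 p hp 1 3 (by decide) ?_
        intro L c hw h1 h2
        exact ⟨visit_in hw (hin1 hvalid hE hnd hne) h1,
          visit_out hw (hout3 hvalid hE hb hnd) h2⟩
  · by_cases hd : B 3 1
    · have hnf : ¬B 4 2 := fun hf => hnoncross 3 1 4 2 hd hf (by decide)
      by_cases he : B 4 1
      · -- case {40, 31, 41} : pair (0, 2)
        have hnb : ¬B 3 0 := fun hb => hnoncross 3 0 4 1 hb he (by decide)
        refine leaf hE hB40 p hp 0 2 (by decide) ?_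
        intro L c hw h1 h2
        refine ⟨?_, visit_in hw (hin0 hvalid hE ha hnb) h1⟩
        obtain ⟨t, ht, hc⟩ := h1
        exact ⟨t, le_of_lt ht, hc⟩
      · -- case {30, 40, 31} : pair (2, 4)
        obtain ⟨l, k, hBlk, hc⟩ := hmax 4 1 (by decide) he
        rw [e4, e1] at hc
        have hl5 := l.isLt
        have hk5 := k.isLt
        have hk0 : k = 0 := Fin.ext (by rw [e0]; omega)
        have hl : (l : ℕ) = 2 ∨ (l : ℕ) = 3 := by omega
        rcases hl with hl | hl
        · have hl2 : l = 2 := Fin.ext (by rw [e2]; omega)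
          rw [hl2, hk0] at hBlk
          exact absurd hBlk ha
        · have hl3 : l = 3 := Fin.ext (by rw [e3]; omega)
          have hb : B 3 0 := by rwa [hl3, hk0] at hBlk
          refine leaf hE hB40 p hp 2 4 (by decide) ?_
          intro L c hw h1 h2
          refine ⟨visit_out hw (hout4 hvalid hE he hnf) h2, ?_⟩
          obtain ⟨t, ht, hc⟩ := h2
          exact ⟨t, le_of_lt ht, hc⟩
    · -- ¬B 2 0, ¬B 3 1 : derive B 4 1
      obtain ⟨l, k, hBlk, hc⟩ := hmax 2 0 (by decide) ha
      rw [e2, e0] at hc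
      have hl5 := l.isLt
      have hk5 := k.isLt
      have hk1 : k = 1 := Fin.ext (by rw [e1]; omega)
      have hl : (l : ℕ) = 3 ∨ (l : ℕ) = 4 := by omega
      have he : B 4 1 := by
        rcases hl with hl | hl
        · have hl3 : l = 3 := Fin.ext (by rw [e3]; omega)
          rw [hl3, hk1] at hBlk
          exact absurd hBlk hd
        · have hl4 : l = 4 := Fin.ext (by rw [e4]; omega)
          rwa [hl4, hk1] at hBlk
      have hnb : ¬B 3 0 := fun hb => hnoncross 3 0 4 1 hb he (by decide)
      by_cases hf : B 4 2
      · -- case {40, 41, 42} : pair (0, 2)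
        refine leaf hE hB40 p hp 0 2 (by decide) ?_
        intro L c hw h1 h2
        refine ⟨?_, visit_in hw (hin0 hvalid hE ha hnb) h1⟩
        obtain ⟨t, ht, hc⟩ := h1
        exact ⟨t, le_of_lt ht, hc⟩
      · -- impossible
        exfalso
        obtain ⟨l, k, hBlk, hc⟩ := hmax 4 2 (by decide) hf
        rw [e4, e2] at hc
        have hl5 := l.isLt
        have hk5 := k.isLt
        have hl3 : l = 3 := Fin.ext (by rw [e3]; omega)
        have hk : (k : ℕ) = 0 ∨ (k : ℕ) = 1 := by omega
        rcases hk with hk | hk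
        · have hk0 : k = 0 := Fin.ext (by rw [e0]; omega)
          rw [hl3, hk0] at hBlk
          exact absurd hBlk hnb
        · have hk1 : k = 1 := Fin.ext (by rw [e1]; omega)
          rw [hl3, hk1] at hBlk
          exact absurd hBlk hd
end

section
/- Consider the 1-PPB graph on one-dimensional points p_1 < ... < p_5 with distances p_2−p_1 = p_5−p_4 = ε and p_3−p_2 = p_4−p_3 = 1 (ε > 0), with baseline edges and back edges (p_3, p_1) and (p_5, p_3). Its oriented dilation equals (2+2ε)/2 = 1+ε, attained by the pair (p_2, p_4). -/
private lemma perim4 (a b c m : ℝ)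
    (h : m ≤ 2*(b-a) ∨ m ≤ 2*(a-b) ∨ m ≤ 2*(c-a) ∨ m ≤ 2*(a-c) ∨ m ≤ 2*(c-b) ∨ m ≤ 2*(b-c)) :
    m ≤ |a - b| + |a - c| + |c - b| := by
  rcases h with h|h|h|h|h|h <;>
    linarith [le_abs_self (a-b), neg_le_abs (a-b), le_abs_self (a-c), neg_le_abs (a-c),
      le_abs_self (c-b), neg_le_abs (c-b)]

private lemma tele4 {E : Fin 5 → Fin 5 → Prop} {L : ℕ} {c : ℕ → Fin 5}
    (hw : ∀ t < L, E (c t) (c (t+1))) (p θ : Fin 5 → ℝ)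
    (hθ : ∀ a b, E a b → θ b - θ a ≤ |p b - p a|) :
    ∀ a b, a ≤ b → b ≤ L →
      θ (c b) - θ (c a) ≤ ∑ t ∈ Finset.Ico a b, |p (c (t+1)) - p (c t)| := by
  intro a b hab
  induction b, hab using Nat.le_induction with
  | base => intro _; simp
  | succ b hab ih =>
    intro hbL
    rw [Finset.sum_Ico_succ_top hab]
    have h1 := hθ _ _ (hw b (by omega))
    have h2 := ih (by omega)
    linarith

private def psi4 (ε : ℝ) : Fin 5 → ℝ := ![2+3*ε, 2+4*ε, 1+2*ε, 0, ε]

private def cA : ℕ → Fin 5 := fun t => match t with | 0 => 0 | 1 => 1 | 2 => 2 | _ => 0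
private def cB : ℕ → Fin 5 := fun t => match t with | 0 => 2 | 1 => 3 | 2 => 4 | _ => 2
private def cC : ℕ → Fin 5 :=
  fun t => match t with | 0 => 0 | 1 => 1 | 2 => 2 | 3 => 3 | 4 => 4 | 5 => 2 | _ => 0

set_option maxHeartbeats 2000000 in
/-- the 1-PPB graph on `p = (0, ε, 1+ε, 2+ε, 2+2ε)` with baseline edges
and back edges `(p 3, p 1)` and `(p 5, p 3)` (indices `(2,0)` and `(4,2)`) has oriented
dilation exactly `(2+2ε)/2 = 1+ε`, attained by the pair `(p 2, p 4)` (indices `1,3`):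
every oriented cycle through that pair has length at least
`(1+ε)·(2·(p 4 − p 2)) = 4+4ε`, this is attained, and for every pair of points there is
an oriented cycle of length at most `(1+ε)` times every triangle through the pair. -/
theorem stmt4 (ε : ℝ) (hε : 0 < ε)
    (p : Fin 5 → ℝ) (hp : p = ![0, ε, 1 + ε, 2 + ε, 2 + 2 * ε])
    (E : Fin 5 → Fin 5 → Prop)
    (hE : ∀ a b, E a b ↔ ((a : ℕ) + 1 = (b : ℕ) ∨ (a = 2 ∧ b = 0) ∨ (a = 4 ∧ b = 2))) :
    (∀ (L : ℕ) (c : ℕ → Fin 5), IsClosedWalk E L c →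
      (∃ t < L, c t = 1) → (∃ t < L, c t = 3) →
      (1 + ε) * (2 * (p 3 - p 1)) ≤ ∑ t ∈ Finset.range L, |p (c (t + 1)) - p (c t)|) ∧
    (∃ (L : ℕ) (c : ℕ → Fin 5), IsClosedWalk E L c ∧
      (∃ t < L, c t = 1) ∧ (∃ t < L, c t = 3) ∧
      (∑ t ∈ Finset.range L, |p (c (t + 1)) - p (c t)|) = (1 + ε) * (2 * (p 3 - p 1))) ∧
    (∀ i j : Fin 5, i ≠ j →
      ∃ (L : ℕ) (c : ℕ → Fin 5), IsClosedWalk E L c ∧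
        (∃ t < L, c t = i) ∧ (∃ t < L, c t = j) ∧
        ∀ q : Fin 5, q ≠ i → q ≠ j →
          (∑ t ∈ Finset.range L, |p (c (t + 1)) - p (c t)|) ≤
            (1 + ε) * (|p i - p j| + |p i - p q| + |p q - p j|)) := by
  have e1' : p 1 = ε := by simp [hp]
  have e3' : p 3 = 2+ε := by simp [hp]
  have hwA : IsClosedWalk E 3 cA := by
    refine ⟨by norm_num, rfl, ?_⟩
    intro t ht; interval_cases t <;> (rw [hE]; decide)
  have hwB : IsClosedWalk E 3 cB := by
    refine ⟨by norm_num, rfl, ?_⟩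
    intro t ht; interval_cases t <;> (rw [hE]; decide)
  have hwC : IsClosedWalk E 6 cC := by
    refine ⟨by norm_num, rfl, ?_⟩
    intro t ht; interval_cases t <;> (rw [hE]; decide)
  have hsA : (∑ t ∈ Finset.range 3, |p (cA (t + 1)) - p (cA t)|) = (1+ε)*2 := by
    simp [Finset.sum_range_succ, cA, hp]
    rw [abs_of_nonneg hε.le, abs_of_nonpos (show -ε + -1 ≤ 0 by linarith)]; ring
  have hsB : (∑ t ∈ Finset.range 3, |p (cB (t + 1)) - p (cB t)|) = (1+ε)*2 := by
    simp [Finset.sum_range_succ, cB, hp]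
    rw [abs_of_nonneg (show (0:ℝ) ≤ 2-1 by norm_num),
      abs_of_nonneg (show (0:ℝ) ≤ 2*ε-ε by linarith),
      abs_of_nonpos (show 1+ε-(2+2*ε) ≤ 0 by linarith)]; ring
  have hsC : (∑ t ∈ Finset.range 6, |p (cC (t + 1)) - p (cC t)|) = (1+ε)*4 := by
    simp [Finset.sum_range_succ, cC, hp]
    rw [abs_of_nonneg hε.le, abs_of_nonneg (show (0:ℝ) ≤ 2-1 by norm_num),
      abs_of_nonneg (show (0:ℝ) ≤ 2*ε-ε by linarith),
      abs_of_nonpos (show 1+ε-(2+2*ε) ≤ 0 by linarith),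
      abs_of_nonpos (show -ε + -1 ≤ 0 by linarith)]; ring
  have hψ : ∀ a b, E a b → psi4 ε b - psi4 ε a ≤ |p b - p a| := by
    intro a b hab
    rw [hE] at hab
    subst hp
    fin_cases a <;> fin_cases b <;>
      first
      | (exfalso; revert hab; decide)
      | (rw [le_abs]; simp only [psi4]; norm_num
         first | (left; linarith) | (right; linarith))
  have hφ : ∀ a b, E a b → p b - p a ≤ |p b - p a| := fun a b _ => le_abs_self _
  have eψ1 : psi4 ε 1 = 2+4*ε := by simp [psi4]
  have eψ3 : psi4 ε 3 = 0 := by simp [psi4]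
  have vA : ∀ v : Fin 5, v = 0 ∨ v = 1 ∨ v = 2 → ∃ t < 3, cA t = v := by
    rintro v (rfl|rfl|rfl)
    exacts [⟨0, by norm_num, rfl⟩, ⟨1, by norm_num, rfl⟩, ⟨2, by norm_num, rfl⟩]
  have vB : ∀ v : Fin 5, v = 2 ∨ v = 3 ∨ v = 4 → ∃ t < 3, cB t = v := by
    rintro v (rfl|rfl|rfl)
    exacts [⟨0, by norm_num, rfl⟩, ⟨1, by norm_num, rfl⟩, ⟨2, by norm_num, rfl⟩]
  have vC : ∀ v : Fin 5, ∃ t < 6, cC t = v := by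
    intro v; fin_cases v
    exacts [⟨0, by norm_num, rfl⟩, ⟨1, by norm_num, rfl⟩, ⟨2, by norm_num, rfl⟩,
      ⟨3, by norm_num, rfl⟩, ⟨4, by norm_num, rfl⟩]
  refine ⟨?_, ?_, ?_⟩
  · -- lower bound for every cycle through p 2, p 4 (indices 1, 3)
    rintro L c ⟨hL1, hcL, hEd⟩ ⟨t1, ht1L, ht1⟩ ⟨t3, ht3L, ht3⟩
    rcases lt_trichotomy t1 t3 with h|h|h
    · have s1 := tele4 hEd p (psi4 ε) hψ 0 t1 (Nat.zero_le _) ht1L.le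
      have s2 := tele4 hEd p p hφ t1 t3 h.le ht3L.le
      have s3 := tele4 hEd p (psi4 ε) hψ t3 L ht3L.le le_rfl
      rw [ht1, eψ1] at s1
      rw [ht1, ht3, e1', e3'] at s2
      rw [ht3, hcL, eψ3] at s3
      rw [e1', e3', Finset.range_eq_Ico,
        ← Finset.sum_Ico_consecutive _ (Nat.zero_le t3) ht3L.le,
        ← Finset.sum_Ico_consecutive _ (Nat.zero_le t1) h.le]
      nlinarith [hε]
    · exfalso; rw [h, ht3] at ht1; exact absurd ht1 (by decide)
    · have s1 := tele4 hEd p p hφ 0 t3 (Nat.zero_le _) ht3L.le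
      have s2 := tele4 hEd p (psi4 ε) hψ t3 t1 h.le ht1L.le
      have s3 := tele4 hEd p p hφ t1 L ht1L.le le_rfl
      rw [ht3, e3'] at s1
      rw [ht1, ht3, eψ1, eψ3] at s2
      rw [ht1, hcL, e1'] at s3
      rw [e1', e3', Finset.range_eq_Ico,
        ← Finset.sum_Ico_consecutive _ (Nat.zero_le t1) ht1L.le,
        ← Finset.sum_Ico_consecutive _ (Nat.zero_le t3) h.le]
      nlinarith [hε]
  · -- attained by the big cycle cC
    refine ⟨6, cC, hwC, ⟨1, by norm_num, rfl⟩, ⟨3, by norm_num, rfl⟩, ?_⟩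
    rw [hsC, e1', e3']; ring
  · -- upper bound for every pair
    intro i j hij
    fin_cases i <;> fin_cases j <;>
      first
      | exact absurd rfl hij
      | (refine ⟨3, cA, hwA, vA _ (by decide), vA _ (by decide), ?_⟩
         intro q hqi hqj
         rw [hsA]
         refine mul_le_mul_of_nonneg_left ?_ (by linarith)
         apply perim4
         clear hsA hsB hsC hψ hφ hwA hwB hwC vA vB vC eψ1 eψ3 e1' e3' hij hE E
         subst hp
         fin_cases q <;> simp_all <;>
           first
           | (left; linarith)
           | (right; left; linarith)
           | (right; right; left; linarith)
           | (right; right; right; left; linarith)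
           | (right; right; right; right; left; linarith)
           | (right; right; right; right; right; linarith))
      | (refine ⟨3, cB, hwB, vB _ (by decide), vB _ (by decide), ?_⟩
         intro q hqi hqj
         rw [hsB]
         refine mul_le_mul_of_nonneg_left ?_ (by linarith)
         apply perim4
         clear hsA hsB hsC hψ hφ hwA hwB hwC vA vB vC eψ1 eψ3 e1' e3' hij hE E
         subst hp
         fin_cases q <;> simp_all <;>
           first
           | (left; linarith)
           | (right; left; linarith)
           | (right; right; left; linarith)
           | (right; right; right; left; linarith)
           | (right; right; right; right; left; linarith)
           | (right; right; right; right; right; linarith))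
      | (refine ⟨6, cC, hwC, vC _, vC _, ?_⟩
         intro q hqi hqj
         rw [hsC]
         refine mul_le_mul_of_nonneg_left ?_ (by linarith)
         apply perim4
         clear hsA hsB hsC hψ hφ hwA hwB hwC vA vB vC eψ1 eψ3 e1' e3' hij hE E
         subst hp
         fin_cases q <;> simp_all <;>
           first
           | (left; linarith)
           | (right; left; linarith)
           | (right; right; left; linarith)
           | (right; right; right; left; linarith)
           | (right; right; right; right; left; linarith)
           | (right; right; right; right; right; linarith))
end

section
/- For the one-dimensional point set with consecutive gaps (3−5ε, 1, ε, 1−3ε, 1−ε, 1−ε) (seven points p_1,...,p_7, small ε > 0), the greedy 1-PPB spanner with back edges (p_3,p_1), (p_5,p_3), (p_6,p_3), (p_7,p_3) has oriented dilation (5−7ε)/(1+ε), attained at the pair (p_2, p_4); in particular for 0 < ε < 1/10 the dilation is less than 5. -/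
namespace Stmt10Aux

lemma seg {V : Type*} (p φ : V → ℝ) (E : V → V → Prop)
    (hfeas : ∀ a b, E a b → φ b - φ a ≤ |p b - p a|)
    (c : ℕ → V) (m n : ℕ) (hmn : m ≤ n)
    (hedge : ∀ t, m ≤ t → t < n → E (c t) (c (t + 1))) :
    φ (c n) - φ (c m) ≤ ∑ t ∈ Finset.Ico m n, |p (c (t + 1)) - p (c t)| := by
  induction n, hmn using Nat.le_induction with
  | base => simp
  | succ n hmn ih =>
      rw [Finset.sum_Ico_succ_top hmn]
      have h1 := hfeas _ _ (hedge n hmn (Nat.lt_succ_self n))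
      have h2 := ih (fun t ht ht' => hedge t ht (Nat.lt_succ_of_lt ht'))
      linarith

lemma two_pot {V : Type*} (p ψ χ : V → ℝ) (E : V → V → Prop)
    (hψ : ∀ a b, E a b → ψ b - ψ a ≤ |p b - p a|)
    (hχ : ∀ a b, E a b → χ b - χ a ≤ |p b - p a|)
    (L : ℕ) (c : ℕ → V) (hw : IsClosedWalk E L c)
    (s t : ℕ) (hst : s < t) (htL : t < L) :
    (ψ (c t) - ψ (c s)) + (χ (c s) - χ (c t)) ≤
      ∑ u ∈ Finset.range L, |p (c (u + 1)) - p (c u)| := by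
  obtain ⟨hL, hcl, hed⟩ := hw
  have hsL : s ≤ L := le_of_lt (hst.trans htL)
  have htL' : t ≤ L := le_of_lt htL
  have h1 := seg p χ E hχ c 0 s (Nat.zero_le s)
    (fun u _ hu' => hed u (lt_of_lt_of_le hu' hsL))
  have h2 := seg p ψ E hψ c s t (le_of_lt hst)
    (fun u _ hu' => hed u (lt_of_lt_of_le hu' htL'))
  have h3 := seg p χ E hχ c t L htL' (fun u _ hu' => hed u hu')
  have hsplit : ∑ u ∈ Finset.range L, |p (c (u + 1)) - p (c u)| =
      (∑ u ∈ Finset.Ico 0 s, |p (c (u + 1)) - p (c u)|) +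
      (∑ u ∈ Finset.Ico s t, |p (c (u + 1)) - p (c u)|) +
      (∑ u ∈ Finset.Ico t L, |p (c (u + 1)) - p (c u)|) := by
    rw [Finset.range_eq_Ico, ← Finset.sum_Ico_consecutive _ (Nat.zero_le t) htL',
      ← Finset.sum_Ico_consecutive _ (Nat.zero_le s) (le_of_lt hst)]
  rw [hcl] at h3
  rw [hsplit]
  linarith

lemma div_bound (ε x d b c m : ℝ) (hε : 0 < ε) (h5 : 7 * ε ≤ 5)
    (h1 : x * (1 + ε) ≤ (5 - 7 * ε) * (d + m)) (h2 : m ≤ b + c) :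
    x ≤ (5 - 7 * ε) / (1 + ε) * (d + b + c) := by
  rw [div_mul_eq_mul_div, le_div_iff₀ (by linarith only [hε] : (0:ℝ) < 1 + ε)]
  nlinarith [mul_le_mul_of_nonneg_left h2 (by linarith only [h5] : (0:ℝ) ≤ 5 - 7 * ε)]

lemma feas (p φ : Fin 7 → ℝ) (E : Fin 7 → Fin 7 → Prop)
    (hE : ∀ a b, E a b ↔ ((a : ℕ) + 1 = (b : ℕ) ∨
      (a = 2 ∧ b = 0) ∨ (a = 4 ∧ b = 2) ∨ (a = 5 ∧ b = 2) ∨ (a = 6 ∧ b = 2)))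
    (h01 : φ 1 - φ 0 ≤ |p 1 - p 0|) (h12 : φ 2 - φ 1 ≤ |p 2 - p 1|)
    (h23 : φ 3 - φ 2 ≤ |p 3 - p 2|) (h34 : φ 4 - φ 3 ≤ |p 4 - p 3|)
    (h45 : φ 5 - φ 4 ≤ |p 5 - p 4|) (h56 : φ 6 - φ 5 ≤ |p 6 - p 5|)
    (h20 : φ 0 - φ 2 ≤ |p 0 - p 2|) (h42 : φ 2 - φ 4 ≤ |p 2 - p 4|)
    (h52 : φ 2 - φ 5 ≤ |p 2 - p 5|) (h62 : φ 2 - φ 6 ≤ |p 2 - p 6|) :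
    ∀ a b, E a b → φ b - φ a ≤ |p b - p a| := by
  intro a b hab
  rw [hE] at hab
  rcases hab with h | ⟨ha, hb⟩ | ⟨ha, hb⟩ | ⟨ha, hb⟩ | ⟨ha, hb⟩
  · fin_cases a
    · have hb : b = 1 := Fin.ext h.symm
      subst hb; exact h01
    · have hb : b = 2 := Fin.ext h.symm
      subst hb; exact h12
    · have hb : b = 3 := Fin.ext h.symm
      subst hb; exact h23
    · have hb : b = 4 := Fin.ext h.symm
      subst hb; exact h34
    · have hb : b = 5 := Fin.ext h.symm
      subst hb; exact h45
    · have hb : b = 6 := Fin.ext h.symm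
      subst hb; exact h56
    · exact absurd h (by simp; omega)
  · subst ha; subst hb; exact h20
  · subst ha; subst hb; exact h42
  · subst ha; subst hb; exact h52
  · subst ha; subst hb; exact h62

def phiA (ε : ℝ) : Fin 7 → ℝ := ![5-5*ε, 0, 1, 1+ε, 2-2*ε, 3-3*ε, 4-4*ε]
def phiB (ε : ℝ) : Fin 7 → ℝ := ![6-10*ε, 9-15*ε, 2-5*ε, 0, 1-3*ε, 2-4*ε, 3-5*ε]

def w1 : ℕ → Fin 7
  | 0 => 0 | 1 => 1 | 2 => 2 | _ => 0
def w2 : ℕ → Fin 7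
  | 0 => 2 | 1 => 3 | 2 => 4 | _ => 2
def w3 : ℕ → Fin 7
  | 0 => 2 | 1 => 3 | 2 => 4 | 3 => 5 | _ => 2
def w4 : ℕ → Fin 7
  | 0 => 2 | 1 => 3 | 2 => 4 | 3 => 5 | 4 => 6 | _ => 2
def w5 : ℕ → Fin 7
  | 0 => 0 | 1 => 1 | 2 => 2 | 3 => 3 | 4 => 4 | 5 => 2 | _ => 0
def w6 : ℕ → Fin 7
  | 0 => 0 | 1 => 1 | 2 => 2 | 3 => 3 | 4 => 4 | 5 => 5 | 6 => 2 | _ => 0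
def w7 : ℕ → Fin 7
  | 0 => 0 | 1 => 1 | 2 => 2 | 3 => 3 | 4 => 4 | 5 => 5 | 6 => 6 | 7 => 2 | _ => 0

lemma ar_0_1 (ε : ℝ) (hε : 0 < ε) (hε' : ε < 1 / 10) :
    (8-10*ε) * (1 + ε) ≤ (5 - 7 * ε) * ((3-5*ε) + (3-5*ε)) := by
  nlinarith [mul_nonneg (by linarith : (0:ℝ) ≤ 1 - 5*ε) (by linarith : (0:ℝ) ≤ 1 - ε), sq_nonneg ε]
lemma ar_0_2 (ε : ℝ) (hε : 0 < ε) (hε' : ε < 1 / 10) :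
    (8-10*ε) * (1 + ε) ≤ (5 - 7 * ε) * ((4-5*ε) + (4-5*ε)) := by
  nlinarith [mul_nonneg (by linarith : (0:ℝ) ≤ 1 - 5*ε) (by linarith : (0:ℝ) ≤ 1 - ε), sq_nonneg ε]
lemma ar_0_3 (ε : ℝ) (hε : 0 < ε) (hε' : ε < 1 / 10) :
    (10-14*ε) * (1 + ε) ≤ (5 - 7 * ε) * ((4-4*ε) + (4-4*ε)) := by
  nlinarith [mul_nonneg (by linarith : (0:ℝ) ≤ 1 - 5*ε) (by linarith : (0:ℝ) ≤ 1 - ε), sq_nonneg ε]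
lemma ar_0_4 (ε : ℝ) (hε : 0 < ε) (hε' : ε < 1 / 10) :
    (10-14*ε) * (1 + ε) ≤ (5 - 7 * ε) * ((5-7*ε) + (5-7*ε)) := by
  nlinarith [mul_nonneg (by linarith : (0:ℝ) ≤ 1 - 5*ε) (by linarith : (0:ℝ) ≤ 1 - ε), sq_nonneg ε]
lemma ar_0_5 (ε : ℝ) (hε : 0 < ε) (hε' : ε < 1 / 10) :
    (12-16*ε) * (1 + ε) ≤ (5 - 7 * ε) * ((6-8*ε) + (6-8*ε)) := by
  nlinarith [mul_nonneg (by linarith : (0:ℝ) ≤ 1 - 5*ε) (by linarith : (0:ℝ) ≤ 1 - ε), sq_nonneg ε]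
lemma ar_0_6 (ε : ℝ) (hε : 0 < ε) (hε' : ε < 1 / 10) :
    (14-18*ε) * (1 + ε) ≤ (5 - 7 * ε) * ((7-9*ε) + (7-9*ε)) := by
  nlinarith [mul_nonneg (by linarith : (0:ℝ) ≤ 1 - 5*ε) (by linarith : (0:ℝ) ≤ 1 - ε), sq_nonneg ε]
lemma ar_1_2 (ε : ℝ) (hε : 0 < ε) (hε' : ε < 1 / 10) :
    (8-10*ε) * (1 + ε) ≤ (5 - 7 * ε) * ((1:ℝ) + (1:ℝ)) := by
  nlinarith [mul_nonneg (by linarith : (0:ℝ) ≤ 1 - 5*ε) (by linarith : (0:ℝ) ≤ 1 - ε), sq_nonneg ε]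
lemma ar_1_3 (ε : ℝ) (hε : 0 < ε) (hε' : ε < 1 / 10) :
    (10-14*ε) * (1 + ε) ≤ (5 - 7 * ε) * ((1+ε) + (1+ε)) := by
  nlinarith [mul_nonneg (by linarith : (0:ℝ) ≤ 1 - 5*ε) (by linarith : (0:ℝ) ≤ 1 - ε), sq_nonneg ε]
lemma ar_1_4 (ε : ℝ) (hε : 0 < ε) (hε' : ε < 1 / 10) :
    (10-14*ε) * (1 + ε) ≤ (5 - 7 * ε) * ((2-2*ε) + (2-2*ε)) := by
  nlinarith [mul_nonneg (by linarith : (0:ℝ) ≤ 1 - 5*ε) (by linarith : (0:ℝ) ≤ 1 - ε), sq_nonneg ε]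
lemma ar_1_5 (ε : ℝ) (hε : 0 < ε) (hε' : ε < 1 / 10) :
    (12-16*ε) * (1 + ε) ≤ (5 - 7 * ε) * ((3-3*ε) + (3-3*ε)) := by
  nlinarith [mul_nonneg (by linarith : (0:ℝ) ≤ 1 - 5*ε) (by linarith : (0:ℝ) ≤ 1 - ε), sq_nonneg ε]
lemma ar_1_6 (ε : ℝ) (hε : 0 < ε) (hε' : ε < 1 / 10) :
    (14-18*ε) * (1 + ε) ≤ (5 - 7 * ε) * ((4-4*ε) + (4-4*ε)) := by
  nlinarith [mul_nonneg (by linarith : (0:ℝ) ≤ 1 - 5*ε) (by linarith : (0:ℝ) ≤ 1 - ε), sq_nonneg ε]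
lemma ar_2_3 (ε : ℝ) (hε : 0 < ε) (hε' : ε < 1 / 10) :
    (2-4*ε) * (1 + ε) ≤ (5 - 7 * ε) * ((1*ε) + (2-5*ε)) := by
  nlinarith [mul_nonneg (by linarith : (0:ℝ) ≤ 1 - 5*ε) (by linarith : (0:ℝ) ≤ 1 - ε), sq_nonneg ε]
lemma ar_2_4 (ε : ℝ) (hε : 0 < ε) (hε' : ε < 1 / 10) :
    (2-4*ε) * (1 + ε) ≤ (5 - 7 * ε) * ((1-2*ε) + (1-2*ε)) := by
  nlinarith [mul_nonneg (by linarith : (0:ℝ) ≤ 1 - 5*ε) (by linarith : (0:ℝ) ≤ 1 - ε), sq_nonneg ε]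
lemma ar_2_5 (ε : ℝ) (hε : 0 < ε) (hε' : ε < 1 / 10) :
    (4-6*ε) * (1 + ε) ≤ (5 - 7 * ε) * ((2-3*ε) + (2-3*ε)) := by
  nlinarith [mul_nonneg (by linarith : (0:ℝ) ≤ 1 - 5*ε) (by linarith : (0:ℝ) ≤ 1 - ε), sq_nonneg ε]
lemma ar_2_6 (ε : ℝ) (hε : 0 < ε) (hε' : ε < 1 / 10) :
    (6-8*ε) * (1 + ε) ≤ (5 - 7 * ε) * ((3-4*ε) + (3-4*ε)) := by
  nlinarith [mul_nonneg (by linarith : (0:ℝ) ≤ 1 - 5*ε) (by linarith : (0:ℝ) ≤ 1 - ε), sq_nonneg ε]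
lemma ar_3_4 (ε : ℝ) (hε : 0 < ε) (hε' : ε < 1 / 10) :
    (2-4*ε) * (1 + ε) ≤ (5 - 7 * ε) * ((1-3*ε) + (1-3*ε)) := by
  nlinarith [mul_nonneg (by linarith : (0:ℝ) ≤ 1 - 5*ε) (by linarith : (0:ℝ) ≤ 1 - ε), sq_nonneg ε]
lemma ar_3_5 (ε : ℝ) (hε : 0 < ε) (hε' : ε < 1 / 10) :
    (4-6*ε) * (1 + ε) ≤ (5 - 7 * ε) * ((2-4*ε) + (2-4*ε)) := by
  nlinarith [mul_nonneg (by linarith : (0:ℝ) ≤ 1 - 5*ε) (by linarith : (0:ℝ) ≤ 1 - ε), sq_nonneg ε]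
lemma ar_3_6 (ε : ℝ) (hε : 0 < ε) (hε' : ε < 1 / 10) :
    (6-8*ε) * (1 + ε) ≤ (5 - 7 * ε) * ((3-5*ε) + (3-5*ε)) := by
  nlinarith [mul_nonneg (by linarith : (0:ℝ) ≤ 1 - 5*ε) (by linarith : (0:ℝ) ≤ 1 - ε), sq_nonneg ε]
lemma ar_4_5 (ε : ℝ) (hε : 0 < ε) (hε' : ε < 1 / 10) :
    (4-6*ε) * (1 + ε) ≤ (5 - 7 * ε) * ((1-ε) + (1-ε)) := by
  nlinarith [mul_nonneg (by linarith : (0:ℝ) ≤ 1 - 5*ε) (by linarith : (0:ℝ) ≤ 1 - ε), sq_nonneg ε]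
lemma ar_4_6 (ε : ℝ) (hε : 0 < ε) (hε' : ε < 1 / 10) :
    (6-8*ε) * (1 + ε) ≤ (5 - 7 * ε) * ((2-2*ε) + (2-2*ε)) := by
  nlinarith [mul_nonneg (by linarith : (0:ℝ) ≤ 1 - 5*ε) (by linarith : (0:ℝ) ≤ 1 - ε), sq_nonneg ε]
lemma ar_5_6 (ε : ℝ) (hε : 0 < ε) (hε' : ε < 1 / 10) :
    (6-8*ε) * (1 + ε) ≤ (5 - 7 * ε) * ((1-ε) + (1-ε)) := by
  nlinarith [mul_nonneg (by linarith : (0:ℝ) ≤ 1 - 5*ε) (by linarith : (0:ℝ) ≤ 1 - ε), sq_nonneg ε]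

end Stmt10Aux

open Stmt10Aux in
set_option maxHeartbeats 4000000 in
theorem stmt10 (ε : ℝ) (hε : 0 < ε) (hε' : ε < 1 / 10)
    (p : Fin 7 → ℝ)
    (hp : p = ![0, 3 - 5 * ε, 4 - 5 * ε, 4 - 4 * ε, 5 - 7 * ε, 6 - 8 * ε, 7 - 9 * ε])
    (E : Fin 7 → Fin 7 → Prop)
    (hE : ∀ a b, E a b ↔ ((a : ℕ) + 1 = (b : ℕ) ∨
      (a = 2 ∧ b = 0) ∨ (a = 4 ∧ b = 2) ∨ (a = 5 ∧ b = 2) ∨ (a = 6 ∧ b = 2))) :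
    (∀ (L : ℕ) (c : ℕ → Fin 7), IsClosedWalk E L c →
      (∃ t < L, c t = 1) → (∃ t < L, c t = 3) →
      (5 - 7 * ε) / (1 + ε) * (2 * (p 3 - p 1)) ≤
        ∑ t ∈ Finset.range L, |p (c (t + 1)) - p (c t)|) ∧
    (∃ (L : ℕ) (c : ℕ → Fin 7), IsClosedWalk E L c ∧
      (∃ t < L, c t = 1) ∧ (∃ t < L, c t = 3) ∧
      (∑ t ∈ Finset.range L, |p (c (t + 1)) - p (c t)|) =
        (5 - 7 * ε) / (1 + ε) * (2 * (p 3 - p 1))) ∧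
    (∀ i j : Fin 7, i ≠ j →
      ∃ (L : ℕ) (c : ℕ → Fin 7), IsClosedWalk E L c ∧
        (∃ t < L, c t = i) ∧ (∃ t < L, c t = j) ∧
        ∀ q : Fin 7, q ≠ i → q ≠ j →
          (∑ t ∈ Finset.range L, |p (c (t + 1)) - p (c t)|) ≤
            (5 - 7 * ε) / (1 + ε) * (|p i - p j| + |p i - p q| + |p q - p j|)) ∧
    (5 - 7 * ε) / (1 + ε) < 5 := by
  have d01 : |p 0 - p 1| = (3-5*ε) := by
    rw [hp]; show |(0:ℝ) - (3-5*ε)| = (3-5*ε)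
    rw [abs_of_nonpos (by linarith only [hε, hε'])]; ring
  have d02 : |p 0 - p 2| = (4-5*ε) := by
    rw [hp]; show |(0:ℝ) - (4-5*ε)| = (4-5*ε)
    rw [abs_of_nonpos (by linarith only [hε, hε'])]; ring
  have d03 : |p 0 - p 3| = (4-4*ε) := by
    rw [hp]; show |(0:ℝ) - (4-4*ε)| = (4-4*ε)
    rw [abs_of_nonpos (by linarith only [hε, hε'])]; ring
  have d04 : |p 0 - p 4| = (5-7*ε) := by
    rw [hp]; show |(0:ℝ) - (5-7*ε)| = (5-7*ε)
    rw [abs_of_nonpos (by linarith only [hε, hε'])]; ring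
  have d05 : |p 0 - p 5| = (6-8*ε) := by
    rw [hp]; show |(0:ℝ) - (6-8*ε)| = (6-8*ε)
    rw [abs_of_nonpos (by linarith only [hε, hε'])]; ring
  have d06 : |p 0 - p 6| = (7-9*ε) := by
    rw [hp]; show |(0:ℝ) - (7-9*ε)| = (7-9*ε)
    rw [abs_of_nonpos (by linarith only [hε, hε'])]; ring
  have d10 : |p 1 - p 0| = (3-5*ε) := by
    rw [hp]; show |(3-5*ε) - (0:ℝ)| = (3-5*ε)
    rw [abs_of_nonneg (by linarith only [hε, hε'])]; ring
  have d12 : |p 1 - p 2| = (1:ℝ) := by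
    rw [hp]; show |(3-5*ε) - (4-5*ε)| = (1:ℝ)
    rw [abs_of_nonpos (by linarith only [hε, hε'])]; ring
  have d13 : |p 1 - p 3| = (1+ε) := by
    rw [hp]; show |(3-5*ε) - (4-4*ε)| = (1+ε)
    rw [abs_of_nonpos (by linarith only [hε, hε'])]; ring
  have d14 : |p 1 - p 4| = (2-2*ε) := by
    rw [hp]; show |(3-5*ε) - (5-7*ε)| = (2-2*ε)
    rw [abs_of_nonpos (by linarith only [hε, hε'])]; ring
  have d15 : |p 1 - p 5| = (3-3*ε) := by
    rw [hp]; show |(3-5*ε) - (6-8*ε)| = (3-3*ε)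
    rw [abs_of_nonpos (by linarith only [hε, hε'])]; ring
  have d16 : |p 1 - p 6| = (4-4*ε) := by
    rw [hp]; show |(3-5*ε) - (7-9*ε)| = (4-4*ε)
    rw [abs_of_nonpos (by linarith only [hε, hε'])]; ring
  have d20 : |p 2 - p 0| = (4-5*ε) := by
    rw [hp]; show |(4-5*ε) - (0:ℝ)| = (4-5*ε)
    rw [abs_of_nonneg (by linarith only [hε, hε'])]; ring
  have d21 : |p 2 - p 1| = (1:ℝ) := by
    rw [hp]; show |(4-5*ε) - (3-5*ε)| = (1:ℝ)
    rw [abs_of_nonneg (by linarith only [hε, hε'])]; ring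
  have d23 : |p 2 - p 3| = (1*ε) := by
    rw [hp]; show |(4-5*ε) - (4-4*ε)| = (1*ε)
    rw [abs_of_nonpos (by linarith only [hε, hε'])]; ring
  have d24 : |p 2 - p 4| = (1-2*ε) := by
    rw [hp]; show |(4-5*ε) - (5-7*ε)| = (1-2*ε)
    rw [abs_of_nonpos (by linarith only [hε, hε'])]; ring
  have d25 : |p 2 - p 5| = (2-3*ε) := by
    rw [hp]; show |(4-5*ε) - (6-8*ε)| = (2-3*ε)
    rw [abs_of_nonpos (by linarith only [hε, hε'])]; ring
  have d26 : |p 2 - p 6| = (3-4*ε) := by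
    rw [hp]; show |(4-5*ε) - (7-9*ε)| = (3-4*ε)
    rw [abs_of_nonpos (by linarith only [hε, hε'])]; ring
  have d30 : |p 3 - p 0| = (4-4*ε) := by
    rw [hp]; show |(4-4*ε) - (0:ℝ)| = (4-4*ε)
    rw [abs_of_nonneg (by linarith only [hε, hε'])]; ring
  have d31 : |p 3 - p 1| = (1+ε) := by
    rw [hp]; show |(4-4*ε) - (3-5*ε)| = (1+ε)
    rw [abs_of_nonneg (by linarith only [hε, hε'])]; ring
  have d32 : |p 3 - p 2| = (1*ε) := by
    rw [hp]; show |(4-4*ε) - (4-5*ε)| = (1*ε)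
    rw [abs_of_nonneg (by linarith only [hε, hε'])]; ring
  have d34 : |p 3 - p 4| = (1-3*ε) := by
    rw [hp]; show |(4-4*ε) - (5-7*ε)| = (1-3*ε)
    rw [abs_of_nonpos (by linarith only [hε, hε'])]; ring
  have d35 : |p 3 - p 5| = (2-4*ε) := by
    rw [hp]; show |(4-4*ε) - (6-8*ε)| = (2-4*ε)
    rw [abs_of_nonpos (by linarith only [hε, hε'])]; ring
  have d36 : |p 3 - p 6| = (3-5*ε) := by
    rw [hp]; show |(4-4*ε) - (7-9*ε)| = (3-5*ε)
    rw [abs_of_nonpos (by linarith only [hε, hε'])]; ring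
  have d40 : |p 4 - p 0| = (5-7*ε) := by
    rw [hp]; show |(5-7*ε) - (0:ℝ)| = (5-7*ε)
    rw [abs_of_nonneg (by linarith only [hε, hε'])]; ring
  have d41 : |p 4 - p 1| = (2-2*ε) := by
    rw [hp]; show |(5-7*ε) - (3-5*ε)| = (2-2*ε)
    rw [abs_of_nonneg (by linarith only [hε, hε'])]; ring
  have d42 : |p 4 - p 2| = (1-2*ε) := by
    rw [hp]; show |(5-7*ε) - (4-5*ε)| = (1-2*ε)
    rw [abs_of_nonneg (by linarith only [hε, hε'])]; ring
  have d43 : |p 4 - p 3| = (1-3*ε) := by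
    rw [hp]; show |(5-7*ε) - (4-4*ε)| = (1-3*ε)
    rw [abs_of_nonneg (by linarith only [hε, hε'])]; ring
  have d45 : |p 4 - p 5| = (1-ε) := by
    rw [hp]; show |(5-7*ε) - (6-8*ε)| = (1-ε)
    rw [abs_of_nonpos (by linarith only [hε, hε'])]; ring
  have d46 : |p 4 - p 6| = (2-2*ε) := by
    rw [hp]; show |(5-7*ε) - (7-9*ε)| = (2-2*ε)
    rw [abs_of_nonpos (by linarith only [hε, hε'])]; ring
  have d50 : |p 5 - p 0| = (6-8*ε) := by
    rw [hp]; show |(6-8*ε) - (0:ℝ)| = (6-8*ε)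
    rw [abs_of_nonneg (by linarith only [hε, hε'])]; ring
  have d51 : |p 5 - p 1| = (3-3*ε) := by
    rw [hp]; show |(6-8*ε) - (3-5*ε)| = (3-3*ε)
    rw [abs_of_nonneg (by linarith only [hε, hε'])]; ring
  have d52 : |p 5 - p 2| = (2-3*ε) := by
    rw [hp]; show |(6-8*ε) - (4-5*ε)| = (2-3*ε)
    rw [abs_of_nonneg (by linarith only [hε, hε'])]; ring
  have d53 : |p 5 - p 3| = (2-4*ε) := by
    rw [hp]; show |(6-8*ε) - (4-4*ε)| = (2-4*ε)
    rw [abs_of_nonneg (by linarith only [hε, hε'])]; ring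
  have d54 : |p 5 - p 4| = (1-ε) := by
    rw [hp]; show |(6-8*ε) - (5-7*ε)| = (1-ε)
    rw [abs_of_nonneg (by linarith only [hε, hε'])]; ring
  have d56 : |p 5 - p 6| = (1-ε) := by
    rw [hp]; show |(6-8*ε) - (7-9*ε)| = (1-ε)
    rw [abs_of_nonpos (by linarith only [hε, hε'])]; ring
  have d60 : |p 6 - p 0| = (7-9*ε) := by
    rw [hp]; show |(7-9*ε) - (0:ℝ)| = (7-9*ε)
    rw [abs_of_nonneg (by linarith only [hε, hε'])]; ring
  have d61 : |p 6 - p 1| = (4-4*ε) := by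
    rw [hp]; show |(7-9*ε) - (3-5*ε)| = (4-4*ε)
    rw [abs_of_nonneg (by linarith only [hε, hε'])]; ring
  have d62 : |p 6 - p 2| = (3-4*ε) := by
    rw [hp]; show |(7-9*ε) - (4-5*ε)| = (3-4*ε)
    rw [abs_of_nonneg (by linarith only [hε, hε'])]; ring
  have d63 : |p 6 - p 3| = (3-5*ε) := by
    rw [hp]; show |(7-9*ε) - (4-4*ε)| = (3-5*ε)
    rw [abs_of_nonneg (by linarith only [hε, hε'])]; ring
  have d64 : |p 6 - p 4| = (2-2*ε) := by
    rw [hp]; show |(7-9*ε) - (5-7*ε)| = (2-2*ε)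
    rw [abs_of_nonneg (by linarith only [hε, hε'])]; ring
  have d65 : |p 6 - p 5| = (1-ε) := by
    rw [hp]; show |(7-9*ε) - (6-8*ε)| = (1-ε)
    rw [abs_of_nonneg (by linarith only [hε, hε'])]; ring
  have h5ε : 7 * ε ≤ 5 := by linarith only [hε, hε']
  have hA01 : phiA ε 1 - phiA ε 0 ≤ |p 1 - p 0| := by
    rw [d10]; show (0:ℝ) - (5-5*ε) ≤ (3-5*ε)
    linarith only [hε, hε']
  have hA12 : phiA ε 2 - phiA ε 1 ≤ |p 2 - p 1| := by
    rw [d21]; show (1:ℝ) - (0:ℝ) ≤ (1:ℝ)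
    linarith only [hε, hε']
  have hA23 : phiA ε 3 - phiA ε 2 ≤ |p 3 - p 2| := by
    rw [d32]; show (1+ε) - (1:ℝ) ≤ (1*ε)
    linarith only [hε, hε']
  have hA34 : phiA ε 4 - phiA ε 3 ≤ |p 4 - p 3| := by
    rw [d43]; show (2-2*ε) - (1+ε) ≤ (1-3*ε)
    linarith only [hε, hε']
  have hA45 : phiA ε 5 - phiA ε 4 ≤ |p 5 - p 4| := by
    rw [d54]; show (3-3*ε) - (2-2*ε) ≤ (1-ε)
    linarith only [hε, hε']
  have hA56 : phiA ε 6 - phiA ε 5 ≤ |p 6 - p 5| := by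
    rw [d65]; show (4-4*ε) - (3-3*ε) ≤ (1-ε)
    linarith only [hε, hε']
  have hA20 : phiA ε 0 - phiA ε 2 ≤ |p 0 - p 2| := by
    rw [d02]; show (5-5*ε) - (1:ℝ) ≤ (4-5*ε)
    linarith only [hε, hε']
  have hA42 : phiA ε 2 - phiA ε 4 ≤ |p 2 - p 4| := by
    rw [d24]; show (1:ℝ) - (2-2*ε) ≤ (1-2*ε)
    linarith only [hε, hε']
  have hA52 : phiA ε 2 - phiA ε 5 ≤ |p 2 - p 5| := by
    rw [d25]; show (1:ℝ) - (3-3*ε) ≤ (2-3*ε)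
    linarith only [hε, hε']
  have hA62 : phiA ε 2 - phiA ε 6 ≤ |p 2 - p 6| := by
    rw [d26]; show (1:ℝ) - (4-4*ε) ≤ (3-4*ε)
    linarith only [hε, hε']
  have hfeasA := feas p (phiA ε) E hE hA01 hA12 hA23 hA34 hA45 hA56 hA20 hA42 hA52 hA62
  have hB01 : phiB ε 1 - phiB ε 0 ≤ |p 1 - p 0| := by
    rw [d10]; show (9-15*ε) - (6-10*ε) ≤ (3-5*ε)
    linarith only [hε, hε']
  have hB12 : phiB ε 2 - phiB ε 1 ≤ |p 2 - p 1| := by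
    rw [d21]; show (2-5*ε) - (9-15*ε) ≤ (1:ℝ)
    linarith only [hε, hε']
  have hB23 : phiB ε 3 - phiB ε 2 ≤ |p 3 - p 2| := by
    rw [d32]; show (0:ℝ) - (2-5*ε) ≤ (1*ε)
    linarith only [hε, hε']
  have hB34 : phiB ε 4 - phiB ε 3 ≤ |p 4 - p 3| := by
    rw [d43]; show (1-3*ε) - (0:ℝ) ≤ (1-3*ε)
    linarith only [hε, hε']
  have hB45 : phiB ε 5 - phiB ε 4 ≤ |p 5 - p 4| := by
    rw [d54]; show (2-4*ε) - (1-3*ε) ≤ (1-ε)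
    linarith only [hε, hε']
  have hB56 : phiB ε 6 - phiB ε 5 ≤ |p 6 - p 5| := by
    rw [d65]; show (3-5*ε) - (2-4*ε) ≤ (1-ε)
    linarith only [hε, hε']
  have hB20 : phiB ε 0 - phiB ε 2 ≤ |p 0 - p 2| := by
    rw [d02]; show (6-10*ε) - (2-5*ε) ≤ (4-5*ε)
    linarith only [hε, hε']
  have hB42 : phiB ε 2 - phiB ε 4 ≤ |p 2 - p 4| := by
    rw [d24]; show (2-5*ε) - (1-3*ε) ≤ (1-2*ε)
    linarith only [hε, hε']
  have hB52 : phiB ε 2 - phiB ε 5 ≤ |p 2 - p 5| := by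
    rw [d25]; show (2-5*ε) - (2-4*ε) ≤ (2-3*ε)
    linarith only [hε, hε']
  have hB62 : phiB ε 2 - phiB ε 6 ≤ |p 2 - p 6| := by
    rw [d26]; show (2-5*ε) - (3-5*ε) ≤ (3-4*ε)
    linarith only [hε, hε']
  have hfeasB := feas p (phiB ε) E hE hB01 hB12 hB23 hB34 hB45 hB56 hB20 hB42 hB52 hB62
  have hρ : (5 - 7 * ε) / (1 + ε) * (2 * (p 3 - p 1)) = 10 - 14 * ε := by
    have h31 : p 3 - p 1 = 1 + ε := by rw [hp]; show (4-4*ε) - (3-5*ε) = 1 + ε; ring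
    have h1e : (1:ℝ) + ε ≠ 0 := by positivity
    rw [h31]; field_simp; ring
  have hw1 : IsClosedWalk E 3 w1 := by
    refine ⟨by norm_num, rfl, ?_⟩
    intro t ht
    interval_cases t <;> (rw [hE]; decide)
  have hs1 : ∑ t ∈ Finset.range 3, |p (w1 (t + 1)) - p (w1 t)| = (8-10*ε) := by
    simp only [Finset.sum_range_succ, Finset.sum_range_zero]
    norm_num [w1]
    rw [d10, d21, d02]; ring
  have hw2 : IsClosedWalk E 3 w2 := by
    refine ⟨by norm_num, rfl, ?_⟩
    intro t ht
    interval_cases t <;> (rw [hE]; decide)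
  have hs2 : ∑ t ∈ Finset.range 3, |p (w2 (t + 1)) - p (w2 t)| = (2-4*ε) := by
    simp only [Finset.sum_range_succ, Finset.sum_range_zero]
    norm_num [w2]
    rw [d32, d43, d24]; ring
  have hw3 : IsClosedWalk E 4 w3 := by
    refine ⟨by norm_num, rfl, ?_⟩
    intro t ht
    interval_cases t <;> (rw [hE]; decide)
  have hs3 : ∑ t ∈ Finset.range 4, |p (w3 (t + 1)) - p (w3 t)| = (4-6*ε) := by
    simp only [Finset.sum_range_succ, Finset.sum_range_zero]
    norm_num [w3]
    rw [d32, d43, d54, d25]; ring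
  have hw4 : IsClosedWalk E 5 w4 := by
    refine ⟨by norm_num, rfl, ?_⟩
    intro t ht
    interval_cases t <;> (rw [hE]; decide)
  have hs4 : ∑ t ∈ Finset.range 5, |p (w4 (t + 1)) - p (w4 t)| = (6-8*ε) := by
    simp only [Finset.sum_range_succ, Finset.sum_range_zero]
    norm_num [w4]
    rw [d32, d43, d54, d65, d26]; ring
  have hw5 : IsClosedWalk E 6 w5 := by
    refine ⟨by norm_num, rfl, ?_⟩
    intro t ht
    interval_cases t <;> (rw [hE]; decide)
  have hs5 : ∑ t ∈ Finset.range 6, |p (w5 (t + 1)) - p (w5 t)| = (10-14*ε) := by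
    simp only [Finset.sum_range_succ, Finset.sum_range_zero]
    norm_num [w5]
    rw [d10, d21, d32, d43, d24, d02]; ring
  have hw6 : IsClosedWalk E 7 w6 := by
    refine ⟨by norm_num, rfl, ?_⟩
    intro t ht
    interval_cases t <;> (rw [hE]; decide)
  have hs6 : ∑ t ∈ Finset.range 7, |p (w6 (t + 1)) - p (w6 t)| = (12-16*ε) := by
    simp only [Finset.sum_range_succ, Finset.sum_range_zero]
    norm_num [w6]
    rw [d10, d21, d32, d43, d54, d25, d02]; ring
  have hw7 : IsClosedWalk E 8 w7 := by
    refine ⟨by norm_num, rfl, ?_⟩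
    intro t ht
    interval_cases t <;> (rw [hE]; decide)
  have hs7 : ∑ t ∈ Finset.range 8, |p (w7 (t + 1)) - p (w7 t)| = (14-18*ε) := by
    simp only [Finset.sum_range_succ, Finset.sum_range_zero]
    norm_num [w7]
    rw [d10, d21, d32, d43, d54, d65, d26, d02]; ring
  refine ⟨?_, ?_, ?_, ?_⟩
  · intro L c hw h1 h3
    obtain ⟨t1, ht1, hc1⟩ := h1
    obtain ⟨t2, ht2, hc3⟩ := h3
    rw [hρ]
    rcases lt_trichotomy t1 t2 with h | h | h
    · have hb := two_pot p (phiA ε) (phiB ε) E hfeasA hfeasB L c hw t1 t2 h ht2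
      rw [hc1, hc3] at hb
      have hv : phiA ε 3 - phiA ε 1 + (phiB ε 1 - phiB ε 3) = 10 - 14 * ε := by
        show (1+ε) - (0:ℝ) + ((9-15*ε) - 0) = 10 - 14*ε; ring
      linarith only [hb, hv]
    · exfalso; rw [← h, hc1] at hc3; exact absurd hc3 (by decide)
    · have hb := two_pot p (phiB ε) (phiA ε) E hfeasB hfeasA L c hw t2 t1 h ht1
      rw [hc3, hc1] at hb
      have hv : phiB ε 1 - phiB ε 3 + (phiA ε 3 - phiA ε 1) = 10 - 14 * ε := by
        show (9-15*ε) - (0:ℝ) + ((1+ε) - 0) = 10 - 14*ε; ring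
      linarith only [hb, hv]
  · exact ⟨6, w5, hw5, ⟨1, by norm_num, rfl⟩, ⟨3, by norm_num, rfl⟩, by rw [hs5, hρ]⟩
  · intro i j hij
    fin_cases i <;> fin_cases j
    · exact absurd rfl hij
    · refine ⟨3, w1, hw1, ⟨0, by norm_num, rfl⟩, ⟨1, by norm_num, rfl⟩, ?_⟩
      show ∀ q : Fin 7, q ≠ 0 → q ≠ 1 → (∑ t ∈ Finset.range 3, |p (w1 (t + 1)) - p (w1 t)|) ≤ (5 - 7 * ε) / (1 + ε) * (|p 0 - p 1| + |p 0 - p q| + |p q - p 1|)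
      intro q hqi hqj
      rw [hs1, d01]
      refine div_bound ε _ _ _ _ (3-5*ε) hε h5ε (ar_0_1 ε hε hε') ?_
      rw [← d01]; exact abs_sub_le _ _ _
    · refine ⟨3, w1, hw1, ⟨0, by norm_num, rfl⟩, ⟨2, by norm_num, rfl⟩, ?_⟩
      show ∀ q : Fin 7, q ≠ 0 → q ≠ 2 → (∑ t ∈ Finset.range 3, |p (w1 (t + 1)) - p (w1 t)|) ≤ (5 - 7 * ε) / (1 + ε) * (|p 0 - p 2| + |p 0 - p q| + |p q - p 2|)
      intro q hqi hqj
      rw [hs1, d02]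
      refine div_bound ε _ _ _ _ (4-5*ε) hε h5ε (ar_0_2 ε hε hε') ?_
      rw [← d02]; exact abs_sub_le _ _ _
    · refine ⟨6, w5, hw5, ⟨0, by norm_num, rfl⟩, ⟨3, by norm_num, rfl⟩, ?_⟩
      show ∀ q : Fin 7, q ≠ 0 → q ≠ 3 → (∑ t ∈ Finset.range 6, |p (w5 (t + 1)) - p (w5 t)|) ≤ (5 - 7 * ε) / (1 + ε) * (|p 0 - p 3| + |p 0 - p q| + |p q - p 3|)
      intro q hqi hqj
      rw [hs5, d03]
      refine div_bound ε _ _ _ _ (4-4*ε) hε h5ε (ar_0_3 ε hε hε') ?_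
      rw [← d03]; exact abs_sub_le _ _ _
    · refine ⟨6, w5, hw5, ⟨0, by norm_num, rfl⟩, ⟨4, by norm_num, rfl⟩, ?_⟩
      show ∀ q : Fin 7, q ≠ 0 → q ≠ 4 → (∑ t ∈ Finset.range 6, |p (w5 (t + 1)) - p (w5 t)|) ≤ (5 - 7 * ε) / (1 + ε) * (|p 0 - p 4| + |p 0 - p q| + |p q - p 4|)
      intro q hqi hqj
      rw [hs5, d04]
      refine div_bound ε _ _ _ _ (5-7*ε) hε h5ε (ar_0_4 ε hε hε') ?_
      rw [← d04]; exact abs_sub_le _ _ _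
    · refine ⟨7, w6, hw6, ⟨0, by norm_num, rfl⟩, ⟨5, by norm_num, rfl⟩, ?_⟩
      show ∀ q : Fin 7, q ≠ 0 → q ≠ 5 → (∑ t ∈ Finset.range 7, |p (w6 (t + 1)) - p (w6 t)|) ≤ (5 - 7 * ε) / (1 + ε) * (|p 0 - p 5| + |p 0 - p q| + |p q - p 5|)
      intro q hqi hqj
      rw [hs6, d05]
      refine div_bound ε _ _ _ _ (6-8*ε) hε h5ε (ar_0_5 ε hε hε') ?_
      rw [← d05]; exact abs_sub_le _ _ _
    · refine ⟨8, w7, hw7, ⟨0, by norm_num, rfl⟩, ⟨6, by norm_num, rfl⟩, ?_⟩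
      show ∀ q : Fin 7, q ≠ 0 → q ≠ 6 → (∑ t ∈ Finset.range 8, |p (w7 (t + 1)) - p (w7 t)|) ≤ (5 - 7 * ε) / (1 + ε) * (|p 0 - p 6| + |p 0 - p q| + |p q - p 6|)
      intro q hqi hqj
      rw [hs7, d06]
      refine div_bound ε _ _ _ _ (7-9*ε) hε h5ε (ar_0_6 ε hε hε') ?_
      rw [← d06]; exact abs_sub_le _ _ _
    · refine ⟨3, w1, hw1, ⟨1, by norm_num, rfl⟩, ⟨0, by norm_num, rfl⟩, ?_⟩
      show ∀ q : Fin 7, q ≠ 1 → q ≠ 0 → (∑ t ∈ Finset.range 3, |p (w1 (t + 1)) - p (w1 t)|) ≤ (5 - 7 * ε) / (1 + ε) * (|p 1 - p 0| + |p 1 - p q| + |p q - p 0|)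
      intro q hqi hqj
      rw [hs1, d10]
      refine div_bound ε _ _ _ _ (3-5*ε) hε h5ε (ar_0_1 ε hε hε') ?_
      rw [← d10]; exact abs_sub_le _ _ _
    · exact absurd rfl hij
    · refine ⟨3, w1, hw1, ⟨1, by norm_num, rfl⟩, ⟨2, by norm_num, rfl⟩, ?_⟩
      show ∀ q : Fin 7, q ≠ 1 → q ≠ 2 → (∑ t ∈ Finset.range 3, |p (w1 (t + 1)) - p (w1 t)|) ≤ (5 - 7 * ε) / (1 + ε) * (|p 1 - p 2| + |p 1 - p q| + |p q - p 2|)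
      intro q hqi hqj
      rw [hs1, d12]
      refine div_bound ε _ _ _ _ (1:ℝ) hε h5ε (ar_1_2 ε hε hε') ?_
      rw [← d12]; exact abs_sub_le _ _ _
    · refine ⟨6, w5, hw5, ⟨1, by norm_num, rfl⟩, ⟨3, by norm_num, rfl⟩, ?_⟩
      show ∀ q : Fin 7, q ≠ 1 → q ≠ 3 → (∑ t ∈ Finset.range 6, |p (w5 (t + 1)) - p (w5 t)|) ≤ (5 - 7 * ε) / (1 + ε) * (|p 1 - p 3| + |p 1 - p q| + |p q - p 3|)
      intro q hqi hqj
      rw [hs5, d13]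
      refine div_bound ε _ _ _ _ (1+ε) hε h5ε (ar_1_3 ε hε hε') ?_
      rw [← d13]; exact abs_sub_le _ _ _
    · refine ⟨6, w5, hw5, ⟨1, by norm_num, rfl⟩, ⟨4, by norm_num, rfl⟩, ?_⟩
      show ∀ q : Fin 7, q ≠ 1 → q ≠ 4 → (∑ t ∈ Finset.range 6, |p (w5 (t + 1)) - p (w5 t)|) ≤ (5 - 7 * ε) / (1 + ε) * (|p 1 - p 4| + |p 1 - p q| + |p q - p 4|)
      intro q hqi hqj
      rw [hs5, d14]
      refine div_bound ε _ _ _ _ (2-2*ε) hε h5ε (ar_1_4 ε hε hε') ?_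
      rw [← d14]; exact abs_sub_le _ _ _
    · refine ⟨7, w6, hw6, ⟨1, by norm_num, rfl⟩, ⟨5, by norm_num, rfl⟩, ?_⟩
      show ∀ q : Fin 7, q ≠ 1 → q ≠ 5 → (∑ t ∈ Finset.range 7, |p (w6 (t + 1)) - p (w6 t)|) ≤ (5 - 7 * ε) / (1 + ε) * (|p 1 - p 5| + |p 1 - p q| + |p q - p 5|)
      intro q hqi hqj
      rw [hs6, d15]
      refine div_bound ε _ _ _ _ (3-3*ε) hε h5ε (ar_1_5 ε hε hε') ?_
      rw [← d15]; exact abs_sub_le _ _ _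
    · refine ⟨8, w7, hw7, ⟨1, by norm_num, rfl⟩, ⟨6, by norm_num, rfl⟩, ?_⟩
      show ∀ q : Fin 7, q ≠ 1 → q ≠ 6 → (∑ t ∈ Finset.range 8, |p (w7 (t + 1)) - p (w7 t)|) ≤ (5 - 7 * ε) / (1 + ε) * (|p 1 - p 6| + |p 1 - p q| + |p q - p 6|)
      intro q hqi hqj
      rw [hs7, d16]
      refine div_bound ε _ _ _ _ (4-4*ε) hε h5ε (ar_1_6 ε hε hε') ?_
      rw [← d16]; exact abs_sub_le _ _ _
    · refine ⟨3, w1, hw1, ⟨2, by norm_num, rfl⟩, ⟨0, by norm_num, rfl⟩, ?_⟩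
      show ∀ q : Fin 7, q ≠ 2 → q ≠ 0 → (∑ t ∈ Finset.range 3, |p (w1 (t + 1)) - p (w1 t)|) ≤ (5 - 7 * ε) / (1 + ε) * (|p 2 - p 0| + |p 2 - p q| + |p q - p 0|)
      intro q hqi hqj
      rw [hs1, d20]
      refine div_bound ε _ _ _ _ (4-5*ε) hε h5ε (ar_0_2 ε hε hε') ?_
      rw [← d20]; exact abs_sub_le _ _ _
    · refine ⟨3, w1, hw1, ⟨2, by norm_num, rfl⟩, ⟨1, by norm_num, rfl⟩, ?_⟩
      show ∀ q : Fin 7, q ≠ 2 → q ≠ 1 → (∑ t ∈ Finset.range 3, |p (w1 (t + 1)) - p (w1 t)|) ≤ (5 - 7 * ε) / (1 + ε) * (|p 2 - p 1| + |p 2 - p q| + |p q - p 1|)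
      intro q hqi hqj
      rw [hs1, d21]
      refine div_bound ε _ _ _ _ (1:ℝ) hε h5ε (ar_1_2 ε hε hε') ?_
      rw [← d21]; exact abs_sub_le _ _ _
    · exact absurd rfl hij
    · refine ⟨3, w2, hw2, ⟨0, by norm_num, rfl⟩, ⟨1, by norm_num, rfl⟩, ?_⟩
      show ∀ q : Fin 7, q ≠ 2 → q ≠ 3 → (∑ t ∈ Finset.range 3, |p (w2 (t + 1)) - p (w2 t)|) ≤ (5 - 7 * ε) / (1 + ε) * (|p 2 - p 3| + |p 2 - p q| + |p q - p 3|)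
      intro q hqi hqj
      rw [hs2, d23]
      refine div_bound ε _ _ _ _ (2-5*ε) hε h5ε (ar_2_3 ε hε hε') ?_
      fin_cases q
      · show (2-5*ε:ℝ) ≤ |p 2 - p 0| + |p 0 - p 3|
        rw [d20, d03]; linarith only [hε, hε']
      · show (2-5*ε:ℝ) ≤ |p 2 - p 1| + |p 1 - p 3|
        rw [d21, d13]; linarith only [hε, hε']
      · exact absurd rfl hqi
      · exact absurd rfl hqj
      · show (2-5*ε:ℝ) ≤ |p 2 - p 4| + |p 4 - p 3|
        rw [d24, d43]; linarith only [hε, hε']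
      · show (2-5*ε:ℝ) ≤ |p 2 - p 5| + |p 5 - p 3|
        rw [d25, d53]; linarith only [hε, hε']
      · show (2-5*ε:ℝ) ≤ |p 2 - p 6| + |p 6 - p 3|
        rw [d26, d63]; linarith only [hε, hε']
    · refine ⟨3, w2, hw2, ⟨0, by norm_num, rfl⟩, ⟨2, by norm_num, rfl⟩, ?_⟩
      show ∀ q : Fin 7, q ≠ 2 → q ≠ 4 → (∑ t ∈ Finset.range 3, |p (w2 (t + 1)) - p (w2 t)|) ≤ (5 - 7 * ε) / (1 + ε) * (|p 2 - p 4| + |p 2 - p q| + |p q - p 4|)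
      intro q hqi hqj
      rw [hs2, d24]
      refine div_bound ε _ _ _ _ (1-2*ε) hε h5ε (ar_2_4 ε hε hε') ?_
      rw [← d24]; exact abs_sub_le _ _ _
    · refine ⟨4, w3, hw3, ⟨0, by norm_num, rfl⟩, ⟨3, by norm_num, rfl⟩, ?_⟩
      show ∀ q : Fin 7, q ≠ 2 → q ≠ 5 → (∑ t ∈ Finset.range 4, |p (w3 (t + 1)) - p (w3 t)|) ≤ (5 - 7 * ε) / (1 + ε) * (|p 2 - p 5| + |p 2 - p q| + |p q - p 5|)
      intro q hqi hqj
      rw [hs3, d25]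
      refine div_bound ε _ _ _ _ (2-3*ε) hε h5ε (ar_2_5 ε hε hε') ?_
      rw [← d25]; exact abs_sub_le _ _ _
    · refine ⟨5, w4, hw4, ⟨0, by norm_num, rfl⟩, ⟨4, by norm_num, rfl⟩, ?_⟩
      show ∀ q : Fin 7, q ≠ 2 → q ≠ 6 → (∑ t ∈ Finset.range 5, |p (w4 (t + 1)) - p (w4 t)|) ≤ (5 - 7 * ε) / (1 + ε) * (|p 2 - p 6| + |p 2 - p q| + |p q - p 6|)
      intro q hqi hqj
      rw [hs4, d26]
      refine div_bound ε _ _ _ _ (3-4*ε) hε h5ε (ar_2_6 ε hε hε') ?_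
      rw [← d26]; exact abs_sub_le _ _ _
    · refine ⟨6, w5, hw5, ⟨3, by norm_num, rfl⟩, ⟨0, by norm_num, rfl⟩, ?_⟩
      show ∀ q : Fin 7, q ≠ 3 → q ≠ 0 → (∑ t ∈ Finset.range 6, |p (w5 (t + 1)) - p (w5 t)|) ≤ (5 - 7 * ε) / (1 + ε) * (|p 3 - p 0| + |p 3 - p q| + |p q - p 0|)
      intro q hqi hqj
      rw [hs5, d30]
      refine div_bound ε _ _ _ _ (4-4*ε) hε h5ε (ar_0_3 ε hε hε') ?_
      rw [← d30]; exact abs_sub_le _ _ _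
    · refine ⟨6, w5, hw5, ⟨3, by norm_num, rfl⟩, ⟨1, by norm_num, rfl⟩, ?_⟩
      show ∀ q : Fin 7, q ≠ 3 → q ≠ 1 → (∑ t ∈ Finset.range 6, |p (w5 (t + 1)) - p (w5 t)|) ≤ (5 - 7 * ε) / (1 + ε) * (|p 3 - p 1| + |p 3 - p q| + |p q - p 1|)
      intro q hqi hqj
      rw [hs5, d31]
      refine div_bound ε _ _ _ _ (1+ε) hε h5ε (ar_1_3 ε hε hε') ?_
      rw [← d31]; exact abs_sub_le _ _ _
    · refine ⟨3, w2, hw2, ⟨1, by norm_num, rfl⟩, ⟨0, by norm_num, rfl⟩, ?_⟩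
      show ∀ q : Fin 7, q ≠ 3 → q ≠ 2 → (∑ t ∈ Finset.range 3, |p (w2 (t + 1)) - p (w2 t)|) ≤ (5 - 7 * ε) / (1 + ε) * (|p 3 - p 2| + |p 3 - p q| + |p q - p 2|)
      intro q hqi hqj
      rw [hs2, d32]
      refine div_bound ε _ _ _ _ (2-5*ε) hε h5ε (ar_2_3 ε hε hε') ?_
      fin_cases q
      · show (2-5*ε:ℝ) ≤ |p 3 - p 0| + |p 0 - p 2|
        rw [d30, d02]; linarith only [hε, hε']
      · show (2-5*ε:ℝ) ≤ |p 3 - p 1| + |p 1 - p 2|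
        rw [d31, d12]; linarith only [hε, hε']
      · exact absurd rfl hqj
      · exact absurd rfl hqi
      · show (2-5*ε:ℝ) ≤ |p 3 - p 4| + |p 4 - p 2|
        rw [d34, d42]; linarith only [hε, hε']
      · show (2-5*ε:ℝ) ≤ |p 3 - p 5| + |p 5 - p 2|
        rw [d35, d52]; linarith only [hε, hε']
      · show (2-5*ε:ℝ) ≤ |p 3 - p 6| + |p 6 - p 2|
        rw [d36, d62]; linarith only [hε, hε']
    · exact absurd rfl hij
    · refine ⟨3, w2, hw2, ⟨1, by norm_num, rfl⟩, ⟨2, by norm_num, rfl⟩, ?_⟩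
      show ∀ q : Fin 7, q ≠ 3 → q ≠ 4 → (∑ t ∈ Finset.range 3, |p (w2 (t + 1)) - p (w2 t)|) ≤ (5 - 7 * ε) / (1 + ε) * (|p 3 - p 4| + |p 3 - p q| + |p q - p 4|)
      intro q hqi hqj
      rw [hs2, d34]
      refine div_bound ε _ _ _ _ (1-3*ε) hε h5ε (ar_3_4 ε hε hε') ?_
      rw [← d34]; exact abs_sub_le _ _ _
    · refine ⟨4, w3, hw3, ⟨1, by norm_num, rfl⟩, ⟨3, by norm_num, rfl⟩, ?_⟩
      show ∀ q : Fin 7, q ≠ 3 → q ≠ 5 → (∑ t ∈ Finset.range 4, |p (w3 (t + 1)) - p (w3 t)|) ≤ (5 - 7 * ε) / (1 + ε) * (|p 3 - p 5| + |p 3 - p q| + |p q - p 5|)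
      intro q hqi hqj
      rw [hs3, d35]
      refine div_bound ε _ _ _ _ (2-4*ε) hε h5ε (ar_3_5 ε hε hε') ?_
      rw [← d35]; exact abs_sub_le _ _ _
    · refine ⟨5, w4, hw4, ⟨1, by norm_num, rfl⟩, ⟨4, by norm_num, rfl⟩, ?_⟩
      show ∀ q : Fin 7, q ≠ 3 → q ≠ 6 → (∑ t ∈ Finset.range 5, |p (w4 (t + 1)) - p (w4 t)|) ≤ (5 - 7 * ε) / (1 + ε) * (|p 3 - p 6| + |p 3 - p q| + |p q - p 6|)
      intro q hqi hqj
      rw [hs4, d36]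
      refine div_bound ε _ _ _ _ (3-5*ε) hε h5ε (ar_3_6 ε hε hε') ?_
      rw [← d36]; exact abs_sub_le _ _ _
    · refine ⟨6, w5, hw5, ⟨4, by norm_num, rfl⟩, ⟨0, by norm_num, rfl⟩, ?_⟩
      show ∀ q : Fin 7, q ≠ 4 → q ≠ 0 → (∑ t ∈ Finset.range 6, |p (w5 (t + 1)) - p (w5 t)|) ≤ (5 - 7 * ε) / (1 + ε) * (|p 4 - p 0| + |p 4 - p q| + |p q - p 0|)
      intro q hqi hqj
      rw [hs5, d40]
      refine div_bound ε _ _ _ _ (5-7*ε) hε h5ε (ar_0_4 ε hε hε') ?_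
      rw [← d40]; exact abs_sub_le _ _ _
    · refine ⟨6, w5, hw5, ⟨4, by norm_num, rfl⟩, ⟨1, by norm_num, rfl⟩, ?_⟩
      show ∀ q : Fin 7, q ≠ 4 → q ≠ 1 → (∑ t ∈ Finset.range 6, |p (w5 (t + 1)) - p (w5 t)|) ≤ (5 - 7 * ε) / (1 + ε) * (|p 4 - p 1| + |p 4 - p q| + |p q - p 1|)
      intro q hqi hqj
      rw [hs5, d41]
      refine div_bound ε _ _ _ _ (2-2*ε) hε h5ε (ar_1_4 ε hε hε') ?_
      rw [← d41]; exact abs_sub_le _ _ _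
    · refine ⟨3, w2, hw2, ⟨2, by norm_num, rfl⟩, ⟨0, by norm_num, rfl⟩, ?_⟩
      show ∀ q : Fin 7, q ≠ 4 → q ≠ 2 → (∑ t ∈ Finset.range 3, |p (w2 (t + 1)) - p (w2 t)|) ≤ (5 - 7 * ε) / (1 + ε) * (|p 4 - p 2| + |p 4 - p q| + |p q - p 2|)
      intro q hqi hqj
      rw [hs2, d42]
      refine div_bound ε _ _ _ _ (1-2*ε) hε h5ε (ar_2_4 ε hε hε') ?_
      rw [← d42]; exact abs_sub_le _ _ _
    · refine ⟨3, w2, hw2, ⟨2, by norm_num, rfl⟩, ⟨1, by norm_num, rfl⟩, ?_⟩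
      show ∀ q : Fin 7, q ≠ 4 → q ≠ 3 → (∑ t ∈ Finset.range 3, |p (w2 (t + 1)) - p (w2 t)|) ≤ (5 - 7 * ε) / (1 + ε) * (|p 4 - p 3| + |p 4 - p q| + |p q - p 3|)
      intro q hqi hqj
      rw [hs2, d43]
      refine div_bound ε _ _ _ _ (1-3*ε) hε h5ε (ar_3_4 ε hε hε') ?_
      rw [← d43]; exact abs_sub_le _ _ _
    · exact absurd rfl hij
    · refine ⟨4, w3, hw3, ⟨2, by norm_num, rfl⟩, ⟨3, by norm_num, rfl⟩, ?_⟩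
      show ∀ q : Fin 7, q ≠ 4 → q ≠ 5 → (∑ t ∈ Finset.range 4, |p (w3 (t + 1)) - p (w3 t)|) ≤ (5 - 7 * ε) / (1 + ε) * (|p 4 - p 5| + |p 4 - p q| + |p q - p 5|)
      intro q hqi hqj
      rw [hs3, d45]
      refine div_bound ε _ _ _ _ (1-ε) hε h5ε (ar_4_5 ε hε hε') ?_
      rw [← d45]; exact abs_sub_le _ _ _
    · refine ⟨5, w4, hw4, ⟨2, by norm_num, rfl⟩, ⟨4, by norm_num, rfl⟩, ?_⟩
      show ∀ q : Fin 7, q ≠ 4 → q ≠ 6 → (∑ t ∈ Finset.range 5, |p (w4 (t + 1)) - p (w4 t)|) ≤ (5 - 7 * ε) / (1 + ε) * (|p 4 - p 6| + |p 4 - p q| + |p q - p 6|)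
      intro q hqi hqj
      rw [hs4, d46]
      refine div_bound ε _ _ _ _ (2-2*ε) hε h5ε (ar_4_6 ε hε hε') ?_
      rw [← d46]; exact abs_sub_le _ _ _
    · refine ⟨7, w6, hw6, ⟨5, by norm_num, rfl⟩, ⟨0, by norm_num, rfl⟩, ?_⟩
      show ∀ q : Fin 7, q ≠ 5 → q ≠ 0 → (∑ t ∈ Finset.range 7, |p (w6 (t + 1)) - p (w6 t)|) ≤ (5 - 7 * ε) / (1 + ε) * (|p 5 - p 0| + |p 5 - p q| + |p q - p 0|)
      intro q hqi hqj
      rw [hs6, d50]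
      refine div_bound ε _ _ _ _ (6-8*ε) hε h5ε (ar_0_5 ε hε hε') ?_
      rw [← d50]; exact abs_sub_le _ _ _
    · refine ⟨7, w6, hw6, ⟨5, by norm_num, rfl⟩, ⟨1, by norm_num, rfl⟩, ?_⟩
      show ∀ q : Fin 7, q ≠ 5 → q ≠ 1 → (∑ t ∈ Finset.range 7, |p (w6 (t + 1)) - p (w6 t)|) ≤ (5 - 7 * ε) / (1 + ε) * (|p 5 - p 1| + |p 5 - p q| + |p q - p 1|)
      intro q hqi hqj
      rw [hs6, d51]
      refine div_bound ε _ _ _ _ (3-3*ε) hε h5ε (ar_1_5 ε hε hε') ?_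
      rw [← d51]; exact abs_sub_le _ _ _
    · refine ⟨4, w3, hw3, ⟨3, by norm_num, rfl⟩, ⟨0, by norm_num, rfl⟩, ?_⟩
      show ∀ q : Fin 7, q ≠ 5 → q ≠ 2 → (∑ t ∈ Finset.range 4, |p (w3 (t + 1)) - p (w3 t)|) ≤ (5 - 7 * ε) / (1 + ε) * (|p 5 - p 2| + |p 5 - p q| + |p q - p 2|)
      intro q hqi hqj
      rw [hs3, d52]
      refine div_bound ε _ _ _ _ (2-3*ε) hε h5ε (ar_2_5 ε hε hε') ?_
      rw [← d52]; exact abs_sub_le _ _ _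
    · refine ⟨4, w3, hw3, ⟨3, by norm_num, rfl⟩, ⟨1, by norm_num, rfl⟩, ?_⟩
      show ∀ q : Fin 7, q ≠ 5 → q ≠ 3 → (∑ t ∈ Finset.range 4, |p (w3 (t + 1)) - p (w3 t)|) ≤ (5 - 7 * ε) / (1 + ε) * (|p 5 - p 3| + |p 5 - p q| + |p q - p 3|)
      intro q hqi hqj
      rw [hs3, d53]
      refine div_bound ε _ _ _ _ (2-4*ε) hε h5ε (ar_3_5 ε hε hε') ?_
      rw [← d53]; exact abs_sub_le _ _ _
    · refine ⟨4, w3, hw3, ⟨3, by norm_num, rfl⟩, ⟨2, by norm_num, rfl⟩, ?_⟩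
      show ∀ q : Fin 7, q ≠ 5 → q ≠ 4 → (∑ t ∈ Finset.range 4, |p (w3 (t + 1)) - p (w3 t)|) ≤ (5 - 7 * ε) / (1 + ε) * (|p 5 - p 4| + |p 5 - p q| + |p q - p 4|)
      intro q hqi hqj
      rw [hs3, d54]
      refine div_bound ε _ _ _ _ (1-ε) hε h5ε (ar_4_5 ε hε hε') ?_
      rw [← d54]; exact abs_sub_le _ _ _
    · exact absurd rfl hij
    · refine ⟨5, w4, hw4, ⟨3, by norm_num, rfl⟩, ⟨4, by norm_num, rfl⟩, ?_⟩
      show ∀ q : Fin 7, q ≠ 5 → q ≠ 6 → (∑ t ∈ Finset.range 5, |p (w4 (t + 1)) - p (w4 t)|) ≤ (5 - 7 * ε) / (1 + ε) * (|p 5 - p 6| + |p 5 - p q| + |p q - p 6|)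
      intro q hqi hqj
      rw [hs4, d56]
      refine div_bound ε _ _ _ _ (1-ε) hε h5ε (ar_5_6 ε hε hε') ?_
      rw [← d56]; exact abs_sub_le _ _ _
    · refine ⟨8, w7, hw7, ⟨6, by norm_num, rfl⟩, ⟨0, by norm_num, rfl⟩, ?_⟩
      show ∀ q : Fin 7, q ≠ 6 → q ≠ 0 → (∑ t ∈ Finset.range 8, |p (w7 (t + 1)) - p (w7 t)|) ≤ (5 - 7 * ε) / (1 + ε) * (|p 6 - p 0| + |p 6 - p q| + |p q - p 0|)
      intro q hqi hqj
      rw [hs7, d60]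
      refine div_bound ε _ _ _ _ (7-9*ε) hε h5ε (ar_0_6 ε hε hε') ?_
      rw [← d60]; exact abs_sub_le _ _ _
    · refine ⟨8, w7, hw7, ⟨6, by norm_num, rfl⟩, ⟨1, by norm_num, rfl⟩, ?_⟩
      show ∀ q : Fin 7, q ≠ 6 → q ≠ 1 → (∑ t ∈ Finset.range 8, |p (w7 (t + 1)) - p (w7 t)|) ≤ (5 - 7 * ε) / (1 + ε) * (|p 6 - p 1| + |p 6 - p q| + |p q - p 1|)
      intro q hqi hqj
      rw [hs7, d61]
      refine div_bound ε _ _ _ _ (4-4*ε) hε h5ε (ar_1_6 ε hε hε') ?_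
      rw [← d61]; exact abs_sub_le _ _ _
    · refine ⟨5, w4, hw4, ⟨4, by norm_num, rfl⟩, ⟨0, by norm_num, rfl⟩, ?_⟩
      show ∀ q : Fin 7, q ≠ 6 → q ≠ 2 → (∑ t ∈ Finset.range 5, |p (w4 (t + 1)) - p (w4 t)|) ≤ (5 - 7 * ε) / (1 + ε) * (|p 6 - p 2| + |p 6 - p q| + |p q - p 2|)
      intro q hqi hqj
      rw [hs4, d62]
      refine div_bound ε _ _ _ _ (3-4*ε) hε h5ε (ar_2_6 ε hε hε') ?_
      rw [← d62]; exact abs_sub_le _ _ _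
    · refine ⟨5, w4, hw4, ⟨4, by norm_num, rfl⟩, ⟨1, by norm_num, rfl⟩, ?_⟩
      show ∀ q : Fin 7, q ≠ 6 → q ≠ 3 → (∑ t ∈ Finset.range 5, |p (w4 (t + 1)) - p (w4 t)|) ≤ (5 - 7 * ε) / (1 + ε) * (|p 6 - p 3| + |p 6 - p q| + |p q - p 3|)
      intro q hqi hqj
      rw [hs4, d63]
      refine div_bound ε _ _ _ _ (3-5*ε) hε h5ε (ar_3_6 ε hε hε') ?_
      rw [← d63]; exact abs_sub_le _ _ _
    · refine ⟨5, w4, hw4, ⟨4, by norm_num, rfl⟩, ⟨2, by norm_num, rfl⟩, ?_⟩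
      show ∀ q : Fin 7, q ≠ 6 → q ≠ 4 → (∑ t ∈ Finset.range 5, |p (w4 (t + 1)) - p (w4 t)|) ≤ (5 - 7 * ε) / (1 + ε) * (|p 6 - p 4| + |p 6 - p q| + |p q - p 4|)
      intro q hqi hqj
      rw [hs4, d64]
      refine div_bound ε _ _ _ _ (2-2*ε) hε h5ε (ar_4_6 ε hε hε') ?_
      rw [← d64]; exact abs_sub_le _ _ _
    · refine ⟨5, w4, hw4, ⟨4, by norm_num, rfl⟩, ⟨3, by norm_num, rfl⟩, ?_⟩
      show ∀ q : Fin 7, q ≠ 6 → q ≠ 5 → (∑ t ∈ Finset.range 5, |p (w4 (t + 1)) - p (w4 t)|) ≤ (5 - 7 * ε) / (1 + ε) * (|p 6 - p 5| + |p 6 - p q| + |p q - p 5|)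
      intro q hqi hqj
      rw [hs4, d65]
      refine div_bound ε _ _ _ _ (1-ε) hε h5ε (ar_5_6 ε hε hε') ?_
      rw [← d65]; exact abs_sub_le _ _ _
    · exact absurd rfl hij
  · rw [div_lt_iff₀ (by linarith only [hε] : (0:ℝ) < 1 + ε)]
    linarith only [hε]
end

section
/- Let p_1, p_2, p_4 form an equilateral triangle of side length 1 in the plane and let p_3 be its centroid. For every orientation of the complete graph K_4 on these four points, the oriented dilation is at least 2√3 − 2; moreover there exists an orientation achieving dilation exactly 2√3 − 2. -/
/-- An orientation of the complete graph: for distinct vertices exactly one of the two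
directions is present. -/
def IsOrientation (o : Fin 4 → Fin 4 → Prop) : Prop :=
  ∀ i j : Fin 4, i ≠ j → (o i j ↔ ¬o j i)

/-- Perimeter of the triangle through `p i`, `p j` and the third point `p k`. -/
noncomputable def perim (p : Fin 4 → EuclideanSpace ℝ (Fin 2)) (i j k : Fin 4) : ℝ :=
  dist (p i) (p j) + dist (p i) (p k) + dist (p k) (p j)

/-!
Sides of the outer triangle have length `1` and spokes to the centroid length `s = √3/3`, so
every triangle has perimeter at least `1 + 2s`, with equality when it contains the centroid,
and `(2√3 - 2)(1 + 2s) = 2 + 2s`. Every Hamiltonian cycle of `K₄` has length `2 + 2s` and passes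
through every pair, which gives the sharp orientation. Conversely, every tournament on four
vertices has a pair lying on no common directed triangle, and every closed walk through such a
pair uses at least two sides and at least two spokes, so it has length at least `2 + 2s`. That
count is certified tournament by tournament with shortest-path potentials: if
`φ v ≤ φ u + w u v` along every edge, every walk from `a` to `b` has weight at least `φ b - φ a`.
-/

def IsPotential {V α : Type*} [Add α] [LE α] (E : V → V → Prop) (w : V → V → α)
    (φ : V → α) : Prop :=
  ∀ u v, E u v → φ v ≤ φ u + w u v

section Potential

variable {V α : Type*} [AddCommGroup α] [PartialOrder α] [IsOrderedAddMonoid α]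
  {E : V → V → Prop} {w : V → V → α} {φ ψ : V → α} {c : ℕ → V}

theorem IsPotential.sub_le_sum_Ico (hφ : IsPotential E w φ) {a b : ℕ} (hab : a ≤ b)
    (hc : ∀ t, a ≤ t → t < b → E (c t) (c (t + 1))) :
    φ (c b) - φ (c a) ≤ ∑ t ∈ Finset.Ico a b, w (c t) (c (t + 1)) := by
  induction b, hab using Nat.le_induction with
  | base => simp
  | succ n hn ih =>
    rw [Finset.sum_Ico_succ_top hn]
    calc φ (c (n + 1)) - φ (c a) = (φ (c n) - φ (c a)) + (φ (c (n + 1)) - φ (c n)) := by abel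
      _ ≤ _ := add_le_add (ih fun t h₁ h₂ => hc t h₁ (by omega))
          (sub_le_iff_le_add'.2 (hφ _ _ (hc n hn (by omega))))

theorem IsClosedWalk.sub_add_sub_le_sum_of_le {L : ℕ} (hc : IsClosedWalk E L c)
    (hφ : IsPotential E w φ) (hψ : IsPotential E w ψ) {s t : ℕ} (hst : s ≤ t) (ht : t < L) :
    φ (c t) - φ (c s) + (ψ (c s) - ψ (c t)) ≤ ∑ k ∈ Finset.range L, w (c k) (c (k + 1)) := by
  obtain ⟨-, hcL, hstep⟩ := hc
  have hE : ∀ a b, b ≤ L → ∀ k, a ≤ k → k < b → E (c k) (c (k + 1)) :=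
    fun _ _ hb k _ hk => hstep k (by omega)
  have h₁ := hψ.sub_le_sum_Ico (Nat.zero_le s) (hE 0 s (by omega))
  have h₂ := hφ.sub_le_sum_Ico hst (hE s t ht.le)
  have h₃ := hψ.sub_le_sum_Ico ht.le (hE t L le_rfl)
  rw [hcL] at h₃
  rw [Finset.range_eq_Ico, ← Finset.sum_Ico_consecutive _ (Nat.zero_le t) ht.le,
    ← Finset.sum_Ico_consecutive _ (Nat.zero_le s) hst]
  calc φ (c t) - φ (c s) + (ψ (c s) - ψ (c t))
      = (ψ (c s) - ψ (c 0)) + (φ (c t) - φ (c s)) + (ψ (c 0) - ψ (c t)) := by abel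
    _ ≤ _ := add_le_add (add_le_add h₁ h₂) h₃

theorem IsClosedWalk.sub_add_sub_le_sum {L : ℕ} (hc : IsClosedWalk E L c)
    (hφ : IsPotential E w φ) (hψ : IsPotential E w ψ) {s t : ℕ} (hs : s < L) (ht : t < L) :
    φ (c t) - φ (c s) + (ψ (c s) - ψ (c t)) ≤ ∑ k ∈ Finset.range L, w (c k) (c (k + 1)) := by
  rcases le_total s t with hst | hts
  · exact hc.sub_add_sub_le_sum_of_le hφ hψ hst ht
  · rw [add_comm]
    exact hc.sub_add_sub_le_sum_of_le hψ hφ hts hs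

end Potential

def relax {n : ℕ} (E : Fin n → Fin n → Bool) (w : Fin n → Fin n → ℕ) (φ : Fin n → ℕ)
    (v : Fin n) : ℕ :=
  (List.finRange n).foldl (fun m u => if E u v then min m (φ u + w u v) else m) (φ v)

/-- Bellman–Ford distances from `i`, truncated at `2`. Only their potential property is used,
and `Certifies` checks it. -/
def truncDist {n : ℕ} (E : Fin n → Fin n → Bool) (w : Fin n → Fin n → ℕ) (i : Fin n) :
    Fin n → ℕ :=
  (relax E w)^[n] fun v => if v = i then 0 else 2

/-- By `IsClosedWalk.sub_add_sub_le_sum`, every closed `E`-walk through `i` and `j` then has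
`w`-weight at least `2`. -/
def Certifies {n : ℕ} (E : Fin n → Fin n → Bool) (w : Fin n → Fin n → ℕ) (i j : Fin n) : Prop :=
  IsPotential (E · ·) w (truncDist E w i) ∧ IsPotential (E · ·) w (truncDist E w j) ∧
    2 + truncDist E w i i + truncDist E w j j ≤ truncDist E w i j + truncDist E w j i

instance {n : ℕ} (E : Fin n → Fin n → Bool) (w : Fin n → Fin n → ℕ) (i j : Fin n) :
    Decidable (Certifies E w i j) := by
  unfold Certifies IsPotential; infer_instance

def orientOf (a b c d e f : Bool) : Fin 4 → Fin 4 → Bool :=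
  ![![false, a, b, c], ![!a, false, d, e], ![!b, !d, false, f], ![!c, !e, !f, false]]

theorem IsOrientation.orientOf_eq_true {o : Fin 4 → Fin 4 → Prop} [DecidableRel o]
    (ho : IsOrientation o) {u v : Fin 4} (huv : u ≠ v) (h : o u v) :
    orientOf (o 0 1) (o 0 2) (o 0 3) (o 1 2) (o 1 3) (o 2 3) u v = true := by
  fin_cases u <;> fin_cases v <;> simp_all [orientOf] <;> exact (ho _ _ (by decide)).1 h

def rim (u v : Fin 4) : ℕ := if u ≠ v ∧ u ≠ 2 ∧ v ≠ 2 then 1 else 0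

def spoke (u v : Fin 4) : ℕ := if u ≠ v ∧ (u = 2 ∨ v = 2) then 1 else 0

theorem exists_certifies_orientOf (a b c d e f : Bool) :
    ∃ i j, i ≠ j ∧ Certifies (orientOf a b c d e f) rim i j ∧
      Certifies (orientOf a b c d e f) spoke i j := by
  revert a b c d e f
  decide

theorem dist_centroid_eq_of_equilateral {E : Type*} [NormedAddCommGroup E]
    [InnerProductSpace ℝ E] {a b c : E} {r : ℝ} (hab : dist a b = r) (hbc : dist b c = r)
    (hca : dist c a = r) : dist ((3 : ℝ)⁻¹ • (a + b + c)) a = √3 / 3 * r := by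
  have hr : 0 ≤ r := hab ▸ dist_nonneg
  have hsum : ‖(b - a) + (c - a)‖ ^ 2 = 3 * r ^ 2 := by
    have := parallelogram_law_with_norm ℝ (b - a) (c - a)
    rw [show b - a - (c - a) = b - c by abel, ← dist_eq_norm, ← dist_eq_norm, ← dist_eq_norm,
      hbc, dist_comm, hab, hca] at this
    nlinarith
  rw [dist_eq_norm, show (3 : ℝ)⁻¹ • (a + b + c) - a = (3 : ℝ)⁻¹ • ((b - a) + (c - a)) by module,
    norm_smul, Real.norm_of_nonneg (by norm_num),
    ← pow_left_inj₀ (by positivity) (by positivity) two_ne_zero, mul_pow, hsum, mul_pow,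
    div_pow, Real.sq_sqrt (by norm_num)]
  ring

def IsCenteredUnitTriangle (p : Fin 4 → EuclideanSpace ℝ (Fin 2)) : Prop :=
  ∀ u v, dist (p u) (p v) = rim u v + √3 / 3 * spoke u v

namespace IsCenteredUnitTriangle

variable {p : Fin 4 → EuclideanSpace ℝ (Fin 2)}

theorem of_dist (h01 : dist (p 0) (p 1) = 1) (h13 : dist (p 1) (p 3) = 1)
    (h03 : dist (p 0) (p 3) = 1) (hcent : p 2 = (3 : ℝ)⁻¹ • (p 0 + p 1 + p 3)) :
    IsCenteredUnitTriangle p := by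
  have h20 : dist (p 2) (p 0) = √3 / 3 := by
    rw [hcent, dist_centroid_eq_of_equilateral h01 h13 (by rwa [dist_comm]), mul_one]
  have h21 : dist (p 2) (p 1) = √3 / 3 := by
    rw [hcent, show p 0 + p 1 + p 3 = p 1 + p 3 + p 0 by abel,
      dist_centroid_eq_of_equilateral h13 (by rwa [dist_comm]) h01, mul_one]
  have h23 : dist (p 2) (p 3) = √3 / 3 := by
    rw [hcent, show p 0 + p 1 + p 3 = p 3 + p 0 + p 1 by abel,
      dist_centroid_eq_of_equilateral (by rwa [dist_comm]) h01 h13, mul_one]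
  clear hcent
  intro u v
  fin_cases u <;> fin_cases v <;> simp only [rim, spoke] <;> norm_num <;>
    first | assumption | (rw [dist_comm]; assumption)

theorem perim_eq (hp : IsCenteredUnitTriangle p) (i j k : Fin 4) :
    perim p i j k =
      (rim i j + rim i k + rim k j : ℕ) + √3 / 3 * (spoke i j + spoke i k + spoke k j : ℕ) := by
  simp only [perim, hp _ _]
  push_cast
  ring

theorem one_add_le_perim (hp : IsCenteredUnitTriangle p) {i j k : Fin 4} (hij : i ≠ j)
    (hki : k ≠ i) (hkj : k ≠ j) : 1 + 2 * (√3 / 3) ≤ perim p i j k := by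
  have htri : ∀ i j k : Fin 4, i ≠ j → k ≠ i → k ≠ j →
      (rim i j + rim i k + rim k j = 1 ∧ spoke i j + spoke i k + spoke k j = 2) ∨
        (rim i j + rim i k + rim k j = 3 ∧ spoke i j + spoke i k + spoke k j = 0) := by
    decide
  have hsqrt : √3 ≤ 3 := Real.sqrt_le_iff.2 ⟨by norm_num, by norm_num⟩
  rcases htri i j k hij hki hkj with ⟨hr, hs⟩ | ⟨hr, hs⟩ <;>
    rw [hp.perim_eq, hr, hs] <;> push_cast <;> linarith

theorem exists_perim_eq (hp : IsCenteredUnitTriangle p) {i j : Fin 4} (hij : i ≠ j) :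
    ∃ k, k ≠ i ∧ k ≠ j ∧ perim p i j k = 1 + 2 * (√3 / 3) := by
  have hcenter : ∀ i j : Fin 4, i ≠ j → ∃ k, k ≠ i ∧ k ≠ j ∧
      rim i j + rim i k + rim k j = 1 ∧ spoke i j + spoke i k + spoke k j = 2 := by
    decide
  obtain ⟨k, hki, hkj, hr, hs⟩ := hcenter i j hij
  exact ⟨k, hki, hkj, by rw [hp.perim_eq, hr, hs]; push_cast; ring⟩

theorem isPotential_dist (hp : IsCenteredUnitTriangle p) {o : Fin 4 → Fin 4 → Prop}
    {E : Fin 4 → Fin 4 → Bool} (hoE : ∀ u v, u ≠ v → o u v → E u v = true) {φ ψ : Fin 4 → ℕ}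
    (hφ : IsPotential (E · ·) rim φ) (hψ : IsPotential (E · ·) spoke ψ) :
    IsPotential o (fun u v => dist (p u) (p v)) fun v => φ v + √3 / 3 * ψ v := by
  intro u v huv
  rcases eq_or_ne u v with rfl | hne
  · simp
  have hE := hoE u v hne huv
  have h₁ : (φ v : ℝ) ≤ φ u + rim u v := by exact_mod_cast hφ u v hE
  have h₂ : (ψ v : ℝ) ≤ ψ u + spoke u v := by exact_mod_cast hψ u v hE
  have hs : 0 ≤ √3 / 3 := by positivity
  simp only [hp u v]
  nlinarith

theorem le_sum_dist_of_certifies (hp : IsCenteredUnitTriangle p) {o : Fin 4 → Fin 4 → Prop}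
    {E : Fin 4 → Fin 4 → Bool} (hoE : ∀ u v, u ≠ v → o u v → E u v = true) {i j : Fin 4}
    (hrim : Certifies E rim i j) (hspoke : Certifies E spoke i j) {L : ℕ} {c : ℕ → Fin 4}
    (hc : IsClosedWalk o L c) (hi : ∃ t < L, c t = i) (hj : ∃ t < L, c t = j) :
    2 + 2 * (√3 / 3) ≤ ∑ t ∈ Finset.range L, dist (p (c t)) (p (c (t + 1))) := by
  obtain ⟨s, hsL, rfl⟩ := hi
  obtain ⟨t, htL, rfl⟩ := hj
  have hwalk := hc.sub_add_sub_le_sum (hp.isPotential_dist hoE hrim.1 hspoke.1)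
    (hp.isPotential_dist hoE hrim.2.1 hspoke.2.1) hsL htL
  have hr : (2 : ℝ) + truncDist E rim (c s) (c s) + truncDist E rim (c t) (c t) ≤
      truncDist E rim (c s) (c t) + truncDist E rim (c t) (c s) := by
    exact_mod_cast hrim.2.2
  have hsp : (2 : ℝ) + truncDist E spoke (c s) (c s) + truncDist E spoke (c t) (c t) ≤
      truncDist E spoke (c s) (c t) + truncDist E spoke (c t) (c s) := by
    exact_mod_cast hspoke.2.2
  have hs : 0 ≤ √3 / 3 := by positivity
  nlinarith

theorem sum_dist_hamiltonianCycle (hp : IsCenteredUnitTriangle p) :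
    ∑ t ∈ Finset.range 4, dist (p (Fin.ofNat 4 t)) (p (Fin.ofNat 4 (t + 1))) =
      2 + 2 * (√3 / 3) := by
  have hrim : ∑ t ∈ Finset.range 4, rim (Fin.ofNat 4 t) (Fin.ofNat 4 (t + 1)) = 2 := by
    decide
  have hspoke : ∑ t ∈ Finset.range 4, spoke (Fin.ofNat 4 t) (Fin.ofNat 4 (t + 1)) = 2 := by
    decide
  simp only [hp _ _, Finset.sum_add_distrib, ← Finset.mul_sum, ← Nat.cast_sum, hrim, hspoke]
  ring

end IsCenteredUnitTriangle

def hamiltonianOrientation (u v : Fin 4) : Prop := v = u + 1 ∨ (u < 2 ∧ v = u + 2)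

theorem isOrientation_hamiltonianOrientation : IsOrientation hamiltonianOrientation := by
  unfold IsOrientation hamiltonianOrientation
  decide

theorem isClosedWalk_hamiltonianOrientation :
    IsClosedWalk hamiltonianOrientation 4 (Fin.ofNat 4) :=
  ⟨by norm_num, rfl, by unfold hamiltonianOrientation; decide⟩

theorem two_mul_sqrt_three_sub_two_mul :
    (2 * √3 - 2) * (1 + 2 * (√3 / 3)) = 2 + 2 * (√3 / 3) := by
  linear_combination (4 / 3 : ℝ) * Real.sq_sqrt (show (0 : ℝ) ≤ 3 by norm_num)

/-- let `p 0, p 1, p 3` form an equilateral triangle of side length `1`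
and let `p 2` be its centroid. For every orientation of `K₄` on these four points the
oriented dilation is at least `2√3 − 2` (some pair has every oriented cycle through it
of length at least `(2√3 − 2)` times its optimal triangle), and there is an orientation
achieving dilation exactly `2√3 − 2` (every pair admits an oriented cycle of length at
most `(2√3 − 2)` times every triangle through the pair). -/
theorem stmt12 (p : Fin 4 → EuclideanSpace ℝ (Fin 2))
    (h01 : dist (p 0) (p 1) = 1) (h13 : dist (p 1) (p 3) = 1)
    (h03 : dist (p 0) (p 3) = 1)
    (hcent : p 2 = (3 : ℝ)⁻¹ • (p 0 + p 1 + p 3)) :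
    (∀ o : Fin 4 → Fin 4 → Prop, IsOrientation o →
      ∃ i j : Fin 4, i ≠ j ∧
        ∀ (L : ℕ) (c : ℕ → Fin 4), IsClosedWalk o L c →
          (∃ t < L, c t = i) → (∃ t < L, c t = j) →
          ∃ k : Fin 4, k ≠ i ∧ k ≠ j ∧
            (2 * Real.sqrt 3 - 2) * perim p i j k ≤
              ∑ t ∈ Finset.range L, dist (p (c t)) (p (c (t + 1)))) ∧
    (∃ o : Fin 4 → Fin 4 → Prop, IsOrientation o ∧
      ∀ i j : Fin 4, i ≠ j →
        ∃ (L : ℕ) (c : ℕ → Fin 4), IsClosedWalk o L c ∧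
          (∃ t < L, c t = i) ∧ (∃ t < L, c t = j) ∧
          ∀ k : Fin 4, k ≠ i → k ≠ j →
            (∑ t ∈ Finset.range L, dist (p (c t)) (p (c (t + 1)))) ≤
              (2 * Real.sqrt 3 - 2) * perim p i j k) := by
  have hp := IsCenteredUnitTriangle.of_dist h01 h13 h03 hcent
  have hpos : 0 ≤ 2 * √3 - 2 := by
    nlinarith [Real.sq_sqrt (show (0 : ℝ) ≤ 3 by norm_num), Real.sqrt_nonneg 3]
  refine ⟨fun o ho => ?_, hamiltonianOrientation, isOrientation_hamiltonianOrientation,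
    fun i j hij => ⟨4, _, isClosedWalk_hamiltonianOrientation, ⟨i, i.isLt, Fin.ofNat_val_eq_self i⟩,
      ⟨j, j.isLt, Fin.ofNat_val_eq_self j⟩, fun k hki hkj => ?_⟩⟩
  · classical
    obtain ⟨i, j, hij, hrim, hspoke⟩ :=
      exists_certifies_orientOf (o 0 1) (o 0 2) (o 0 3) (o 1 2) (o 1 3) (o 2 3)
    obtain ⟨k, hki, hkj, hk⟩ := hp.exists_perim_eq hij
    refine ⟨i, j, hij, fun L c hc hi hj => ⟨k, hki, hkj, ?_⟩⟩
    rw [hk, two_mul_sqrt_three_sub_two_mul]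
    exact hp.le_sum_dist_of_certifies (fun _ _ => ho.orientOf_eq_true) hrim hspoke hc hi hj
  · rw [hp.sum_dist_hamiltonianCycle, ← two_mul_sqrt_three_sub_two_mul]
    exact mul_le_mul_of_nonneg_left (hp.one_add_le_perim hij hki hkj) hpos
end

section
/- Any oriented graph on n ≥ 3 collinear points with at most n edges that has finite oriented dilation must be a Hamiltonian directed cycle; consequently, deciding whether there exists an oriented t-spanner with at most n edges is equivalent to deciding whether there exists a Hamiltonian cycle of Euclidean length at most t · min over pairs p,p' of |Δ(p,p')|. -/
private lemma stmt15_aux {V : Type*} [Fintype V] (g : V → ℕ)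
    (h1 : ∀ v, 1 ≤ g v) (h2 : ∑ v, g v ≤ Fintype.card V) (v : V) : g v = 1 := by
  by_contra h
  have hv : 1 < g v := lt_of_le_of_ne (h1 v) (Ne.symm h)
  have hlt : ∑ _v : V, 1 < ∑ v, g v :=
    Finset.sum_lt_sum (fun i _ => h1 i) ⟨v, Finset.mem_univ v, hv⟩
  simp [Finset.card_univ] at hlt
  omega

/-- graph-theoretic core: a digraph on `n ≥ 3` vertices with at most
`n` edges in which every two vertices lie on a common directed cycle is a single
Hamiltonian directed cycle (and its edge set is exactly the cycle's edges). -/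
theorem stmt15 (V : Type*) [Fintype V] [DecidableEq V] (hV : 3 ≤ Fintype.card V)
    (E : Finset (V × V)) (hcard : E.card ≤ Fintype.card V)
    (hcyc : ∀ u v : V, ∃ (m : ℕ) (c : ℕ → V), 1 ≤ m ∧ c m = c 0 ∧
      (∀ t < m, (c t, c (t + 1)) ∈ E) ∧ (∃ t < m, c t = u) ∧ (∃ t < m, c t = v)) :
    ∃ c : ℕ → V,
      (∀ t < Fintype.card V, (c t, c (t + 1)) ∈ E) ∧
      c (Fintype.card V) = c 0 ∧
      (∀ v : V, ∃ t < Fintype.card V, c t = v) ∧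
      (∀ s t, s < Fintype.card V → t < Fintype.card V → c s = c t → s = t) ∧
      (∀ e ∈ E, ∃ t < Fintype.card V, e = (c t, c (t + 1))) := by
  classical
  set n := Fintype.card V with hn
  -- out-fibers nonempty
  have houtne : ∀ v : V, (E.filter (fun e => e.1 = v)).Nonempty := by
    intro v
    obtain ⟨m, c, hm, hc0, hE, ⟨s, hs, hcs⟩, -⟩ := hcyc v v
    exact ⟨(c s, c (s + 1)), Finset.mem_filter.mpr ⟨hE s hs, hcs⟩⟩
  -- in-fibers nonempty
  have hinne : ∀ v : V, (E.filter (fun e => e.2 = v)).Nonempty := by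
    intro v
    obtain ⟨m, c, hm, hc0, hE, ⟨s, hs, hcs⟩, -⟩ := hcyc v v
    rcases Nat.eq_zero_or_pos s with rfl | hspos
    · refine ⟨(c (m - 1), c m), Finset.mem_filter.mpr ⟨?_, by rw [hc0, hcs]⟩⟩
      have h := hE (m - 1) (by omega)
      rwa [Nat.sub_add_cancel hm] at h
    · refine ⟨(c (s - 1), c s), Finset.mem_filter.mpr ⟨?_, hcs⟩⟩
      have h := hE (s - 1) (by omega)
      rwa [Nat.sub_add_cancel hspos] at h
  have hsum1 : E.card = ∑ v : V, (E.filter (fun e => e.1 = v)).card :=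
    Finset.card_eq_sum_card_fiberwise (fun e _ => Finset.mem_univ e.1)
  have hsum2 : E.card = ∑ v : V, (E.filter (fun e => e.2 = v)).card :=
    Finset.card_eq_sum_card_fiberwise (fun e _ => Finset.mem_univ e.2)
  have hout1 : ∀ v, (E.filter (fun e => e.1 = v)).card = 1 :=
    stmt15_aux _ (fun v => Finset.card_pos.mpr (houtne v)) (hsum1 ▸ hcard)
  have hin1 : ∀ v, (E.filter (fun e => e.2 = v)).card = 1 :=
    stmt15_aux _ (fun v => Finset.card_pos.mpr (hinne v)) (hsum2 ▸ hcard)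
  choose A hA using fun v => Finset.card_eq_one.mp (hout1 v)
  choose B hB using fun v => Finset.card_eq_one.mp (hin1 v)
  set f : V → V := fun v => (A v).2 with hf
  have hAmem : ∀ v, A v ∈ E ∧ (A v).1 = v := by
    intro v
    have h : A v ∈ E.filter (fun e => e.1 = v) := (hA v) ▸ Finset.mem_singleton_self _
    exact Finset.mem_filter.mp h
  have hAeq : ∀ v, A v = (v, f v) := fun v => Prod.ext (hAmem v).2 rfl
  have hfE : ∀ v, (v, f v) ∈ E := fun v => hAeq v ▸ (hAmem v).1
  have hEeq : ∀ e ∈ E, e = (e.1, f e.1) := by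
    intro e he
    have h : e ∈ E.filter (fun e' => e'.1 = e.1) := Finset.mem_filter.mpr ⟨he, rfl⟩
    rw [hA e.1, Finset.mem_singleton] at h
    rw [h, hAeq]
  have hinj : Function.Injective f := by
    intro u v huv
    have hu : (u, f u) ∈ E.filter (fun e => e.2 = f u) :=
      Finset.mem_filter.mpr ⟨hfE u, rfl⟩
    have hv : (v, f v) ∈ E.filter (fun e => e.2 = f u) :=
      Finset.mem_filter.mpr ⟨hfE v, huv.symm⟩
    rw [hB (f u), Finset.mem_singleton] at hu hv
    exact congrArg Prod.fst (hu.trans hv.symm)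
  -- walks follow f
  have hwalk : ∀ (m : ℕ) (c : ℕ → V), (∀ t < m, (c t, c (t + 1)) ∈ E) →
      ∀ t ≤ m, c t = f^[t] (c 0) := by
    intro m c hE t
    induction t with
    | zero => simp
    | succ t ih =>
      intro h
      have h1 := ih (by omega)
      have he := hE t (by omega)
      have h2 : c (t + 1) = f (c t) := congrArg Prod.snd (hEeq _ he)
      rw [h2, h1]
      exact (Function.iterate_succ_apply' f t (c 0)).symm
  -- reachability
  have hreach : ∀ u v : V, ∃ k, f^[k] u = v := by
    intro u v
    obtain ⟨m, c, hm, hc0, hE, ⟨s, hs, hcs⟩, ⟨t, ht, hct⟩⟩ := hcyc u v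
    have hcycle : f^[m] (c 0) = c 0 := (hwalk m c hE m le_rfl).symm.trans hc0
    have hu : u = f^[s] (c 0) := hcs ▸ hwalk m c hE s (le_of_lt hs)
    have hv : v = f^[t] (c 0) := hct ▸ hwalk m c hE t (le_of_lt ht)
    have h1 : f^[m - s] u = c 0 := by
      rw [hu, ← Function.iterate_add_apply]
      have : m - s + s = m := by omega
      rw [this, hcycle]
    refine ⟨t + (m - s), ?_⟩
    rw [Function.iterate_add_apply, h1, hv]
  -- every vertex has a period
  have hperiod : ∀ v : V, ∃ k, 0 < k ∧ f^[k] v = v := by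
    intro v
    obtain ⟨m, c, hm, hc0, hE, ⟨s, hs, hcs⟩, -⟩ := hcyc v v
    have hcycle : f^[m] (c 0) = c 0 := (hwalk m c hE m le_rfl).symm.trans hc0
    have hv : v = f^[s] (c 0) := hcs ▸ hwalk m c hE s (le_of_lt hs)
    refine ⟨m, hm, ?_⟩
    rw [hv, ← Function.iterate_add_apply, add_comm, Function.iterate_add_apply,
      hcycle]
  have hne : Nonempty V := Fintype.card_pos_iff.mp (by omega)
  obtain ⟨v0⟩ := hne
  have hPex := hperiod v0
  set p := Nat.find hPex with hp
  obtain ⟨hppos, hpfix⟩ := Nat.find_spec hPex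
  -- injectivity on [0, p)
  have key : ∀ i j, i ≤ j → j < p → f^[i] v0 = f^[j] v0 → i = j := by
    intro i j hij hj heq
    by_contra hne'
    have h1 : f^[j] v0 = f^[i] (f^[j - i] v0) := by
      rw [← Function.iterate_add_apply]
      congr 1; omega
    have h2 : f^[j - i] v0 = v0 := (hinj.iterate i) (by rw [← h1, heq])
    have h3 : p ≤ j - i := Nat.find_le ⟨by omega, h2⟩
    omega
  have hinjp : ∀ i j, i < p → j < p → f^[i] v0 = f^[j] v0 → i = j := by
    intro i j hi hj h
    rcases le_total i j with hle | hle
    · exact key i j hle hj h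
    · exact (key j i hle hi h.symm).symm
  have hmul : ∀ q, f^[p * q] v0 = v0 := by
    intro q
    induction q with
    | zero => simp
    | succ q ih => rw [Nat.mul_succ, Function.iterate_add_apply, hpfix, ih]
  have hmod : ∀ k, f^[k] v0 = f^[k % p] v0 := by
    intro k
    have h : k = k % p + p * (k / p) := by
      have := Nat.div_add_mod k p; omega
    conv_lhs => rw [h]
    rw [Function.iterate_add_apply, hmul]
  have hsurj : ∀ v, ∃ t < p, f^[t] v0 = v := by
    intro v
    obtain ⟨k, hk⟩ := hreach v0 v
    exact ⟨k % p, Nat.mod_lt _ hppos, by rw [← hmod, hk]⟩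
  have hpn : p = n := by
    have h1 : p ≤ n := by
      have h := Fintype.card_le_of_injective (fun i : Fin p => f^[i.1] v0)
        (fun i j h => Fin.ext (hinjp i.1 j.1 i.2 j.2 h))
      simpa using h
    have h2 : n ≤ p := by
      have h := Fintype.card_le_of_surjective (fun i : Fin p => f^[i.1] v0)
        (fun v => by
          obtain ⟨t, ht, h⟩ := hsurj v
          exact ⟨⟨t, ht⟩, h⟩)
      simpa using h
    omega
  refine ⟨fun t => f^[t] v0, ?_, ?_, ?_, ?_, ?_⟩
  · intro t _
    simp only [Function.iterate_succ_apply']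
    exact hfE _
  · show f^[n] v0 = f^[0] v0
    simp [← hpn, hp, hpfix]
  · intro v
    obtain ⟨t, ht, h⟩ := hsurj v
    exact ⟨t, hpn ▸ ht, h⟩
  · intro s t hs ht h
    exact hinjp s t (hpn ▸ hs) (hpn ▸ ht) h
  · intro e he
    obtain ⟨t, ht, h⟩ := hsurj e.1
    refine ⟨t, hpn ▸ ht, ?_⟩
    show e = (f^[t] v0, f^[t + 1] v0)
    rw [hEeq e he, Function.iterate_succ_apply', h]
end
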